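/- arXiv:2406.12991 — 7 statements merged into one kernel-verified Lean document; each statement's English description precedes it below -/
import Mathlib

section
/- Fix integers n_s, n_f ≥ 1, p ≥ 1, N ≥ 2 and a differentiable discrete Lagrangian L_d : ℝ^{n_s} × ℝ^{n_s} × (ℝ^{n_f})^{p+1} → ℝ. Let φˢ : ℝ × ℝ^{n_s} → ℝ^{n_s} and φᶠ : ℝ × ℝ^{n_f} → ℝ^{n_f} be smooth one-parameter groups of transformations with φˢ₀ = id and φᶠ₀ = id, and infinitesimal generators ξˢ(q) = (d/da)|_{a=0} φˢ_a(q), ξᶠ(q) = (d/da)|_{a=0} φᶠ_a(q). Assume L_d is invariant under the lifted action: L_d(φˢ_a(qˢ), φˢ_a(q'ˢ), φᶠ_a(q^{f,0}), …, φᶠ_a(q^{f,p})) = L_d(qˢ, q'ˢ, q^{f,0}, …, q^{f,p}) for all a ∈ ℝ and all arguments. Then along every solution (q_k^s)_{k=0}^N, (q_k^{f,m}) (with q_{k−1}^{f,p} = q_k^{f,0}) of the discrete multirate Euler–Lagrange equations, the discrete momentum map J_k := ⟨D_{q_k^s} L_d(q_{k−1}^s, q_k^s, q_{k−1}^{f,0},…,q_{k−1}^{f,p}),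 ξˢ(q_k^s)⟩ + ⟨D_{q_{k−1}^{f,p}} L_d(q_{k−1}^s, q_k^s, q_{k−1}^{f,0},…,q_{k−1}^{f,p}), ξᶠ(q_{k−1}^{f,p})⟩ is conserved: J_k = J_{k+1} for k = 1, …, N−1. -/
set_option linter.unusedSectionVars false
set_option linter.unusedVariables false

section Aux
variable {E F : Type*} [NormedAddCommGroup E] [NormedSpace ℝ E]
  [NormedAddCommGroup F] [NormedSpace ℝ F]
  {ι : Type*} [DecidableEq ι] [Fintype ι] {G : ι → Type*}
  [∀ i, NormedAddCommGroup (G i)] [∀ i, NormedSpace ℝ (G i)]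

lemma aux_partial1 (L : E × F × (∀ i, G i) → ℝ) (x : E) (y : F) (z : ∀ i, G i)
    (h : DifferentiableAt ℝ L (x, y, z)) (v : E) :
    fderiv ℝ (fun x' => L (x', y, z)) x v = fderiv ℝ L (x, y, z) (v, 0, 0) := by
  have h1 : HasFDerivAt (fun x' : E => (x', y, z))
      ((ContinuousLinearMap.id ℝ E).prod 0) x :=
    (hasFDerivAt_id x).prodMk (hasFDerivAt_const (y, z) x)
  have h2 := (h.hasFDerivAt.comp x h1).fderiv
  have : (fun x' => L (x', y, z)) = L ∘ (fun x' : E => (x', y, z)) := rfl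
  rw [this, h2]
  rfl

lemma aux_partial2 (L : E × F × (∀ i, G i) → ℝ) (x : E) (y : F) (z : ∀ i, G i)
    (h : DifferentiableAt ℝ L (x, y, z)) (v : F) :
    fderiv ℝ (fun y' => L (x, y', z)) y v = fderiv ℝ L (x, y, z) (0, v, 0) := by
  have h1 : HasFDerivAt (fun y' : F => (x, y', z))
      ((0 : F →L[ℝ] E).prod ((ContinuousLinearMap.id ℝ F).prod 0)) y :=
    (hasFDerivAt_const x y).prodMk ((hasFDerivAt_id y).prodMk (hasFDerivAt_const z y))
  have h2 := (h.hasFDerivAt.comp y h1).fderiv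
  have : (fun y' => L (x, y', z)) = L ∘ (fun y' : F => (x, y', z)) := rfl
  rw [this, h2]
  rfl

lemma aux_partial3 (L : E × F × (∀ i, G i) → ℝ) (x : E) (y : F) (z : ∀ i, G i)
    (h : DifferentiableAt ℝ L (x, y, z)) (m : ι) (w : G m) :
    fderiv ℝ (fun u => L (x, y, Function.update z m u)) (z m) w
      = fderiv ℝ L (x, y, z) (0, 0, Pi.single m w) := by
  have h1 : HasFDerivAt (fun u : G m => (x, y, Function.update z m u))
      ((0 : G m →L[ℝ] E).prod ((0 : G m →L[ℝ] F).prod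
        (ContinuousLinearMap.pi (Pi.single m (ContinuousLinearMap.id ℝ (G m)))))) (z m) :=
    (hasFDerivAt_const x _).prodMk ((hasFDerivAt_const y _).prodMk (hasFDerivAt_update z (z m)))
  have hpt : (x, y, Function.update z m (z m)) = (x, y, z) := by
    rw [Function.update_eq_self]
  have hL : HasFDerivAt L (fderiv ℝ L (x, y, z)) (x, y, Function.update z m (z m)) := by
    rw [hpt]; exact h.hasFDerivAt
  have h2 := (hL.comp (z m) h1).fderiv
  have : (fun u => L (x, y, Function.update z m u))
      = L ∘ (fun u : G m => (x, y, Function.update z m u)) := rfl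
  have hw : (ContinuousLinearMap.pi (Pi.single m (ContinuousLinearMap.id ℝ (G m)))) w
      = Pi.single m w := by
    funext i
    rcases eq_or_ne i m with rfl | hi
    · simp
    · simp [Pi.single_apply, hi]
  rw [this, h2, ContinuousLinearMap.comp_apply]
  simp [ContinuousLinearMap.prod_apply, hw]

lemma aux_sum3 (L : E × F × (∀ i, G i) → ℝ) (x : E) (y : F) (z : ∀ i, G i)
    (h : ∀ i, G i) :
    fderiv ℝ L (x, y, z) (0, 0, h)
      = ∑ m, fderiv ℝ L (x, y, z) (0, 0, Pi.single m (h m)) := by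
  have hsum : ((0 : E), (0 : F), h) = ∑ m, ((0 : E), (0 : F), Pi.single m (h m)) := by
    ext
    · simp [Prod.fst_sum]
    · simp [Prod.fst_sum, Prod.snd_sum]
    · simp [Prod.snd_sum, Finset.univ_sum_single]
  rw [hsum, map_sum]

end Aux



/-- The discrete momentum map
`J_k = ⟨D₂L_d(q_{k−1}^s, q_k^s, q_{k−1}^f), ξˢ(q_k^s)⟩
      + ⟨D_{q_{k−1}^{f,p}}L_d(q_{k−1}^s, q_k^s, q_{k−1}^f), ξᶠ(q_{k−1}^{f,p})⟩`. -/
noncomputable def discreteMomentumMap (ns nf p : ℕ)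
    (Ld : (Fin ns → ℝ) → (Fin ns → ℝ) → (Fin (p + 1) → Fin nf → ℝ) → ℝ)
    (ξs : (Fin ns → ℝ) → (Fin ns → ℝ)) (ξf : (Fin nf → ℝ) → (Fin nf → ℝ))
    (qs : ℕ → Fin ns → ℝ) (qf : ℕ → Fin (p + 1) → Fin nf → ℝ) (k : ℕ) : ℝ :=
  fderiv ℝ (fun x => Ld (qs (k - 1)) x (qf (k - 1))) (qs k) (ξs (qs k)) +
    fderiv ℝ (fun x => Ld (qs (k - 1)) (qs k) (Function.update (qf (k - 1)) (Fin.last p) x))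
      (qf (k - 1) (Fin.last p)) (ξf (qf (k - 1) (Fin.last p)))

/-- Discrete Noether theorem for multirate variational integrators: if the
discrete Lagrangian is invariant under the lift of smooth one-parameter groups
of transformations acting on the slow and fast variables, then the discrete
momentum map is conserved along every solution of the discrete multirate
Euler–Lagrange equations. -/
theorem discrete_multirate_noether
    (ns nf p N : ℕ) (hns : 1 ≤ ns) (hnf : 1 ≤ nf) (hp : 1 ≤ p) (hN : 2 ≤ N)
    (Ld : (Fin ns → ℝ) → (Fin ns → ℝ) → (Fin (p + 1) → Fin nf → ℝ) → ℝ)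
    (hLd : Differentiable ℝ
      (fun x : (Fin ns → ℝ) × (Fin ns → ℝ) × (Fin (p + 1) → Fin nf → ℝ) =>
        Ld x.1 x.2.1 x.2.2))
    (φs : ℝ → (Fin ns → ℝ) → (Fin ns → ℝ)) (φf : ℝ → (Fin nf → ℝ) → (Fin nf → ℝ))
    (hφs_smooth : ContDiff ℝ (⊤ : ℕ∞) (fun x : ℝ × (Fin ns → ℝ) => φs x.1 x.2))
    (hφf_smooth : ContDiff ℝ (⊤ : ℕ∞) (fun x : ℝ × (Fin nf → ℝ) => φf x.1 x.2))
    (hφs_zero : ∀ q, φs 0 q = q) (hφf_zero : ∀ q, φf 0 q = q)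
    (hφs_group : ∀ a b q, φs (a + b) q = φs a (φs b q))
    (hφf_group : ∀ a b q, φf (a + b) q = φf a (φf b q))
    (hinv : ∀ (a : ℝ) (x y : Fin ns → ℝ) (z : Fin (p + 1) → Fin nf → ℝ),
      Ld (φs a x) (φs a y) (fun m => φf a (z m)) = Ld x y z)
    -- the discrete trajectory, with the identification `q_{k}^{f,p} = q_{k+1}^{f,0}`
    (qs : ℕ → Fin ns → ℝ) (qf : ℕ → Fin (p + 1) → Fin nf → ℝ)
    (hid : ∀ k, qf k (Fin.last p) = qf (k + 1) 0)
    -- discrete multirate Euler–Lagrange equations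
    (hDELs : ∀ k, 1 ≤ k → k ≤ N - 1 →
      fderiv ℝ (fun x => Ld x (qs (k + 1)) (qf k) + Ld (qs (k - 1)) x (qf (k - 1)))
        (qs k) = 0)
    (hDELf0 : ∀ k, 1 ≤ k → k ≤ N - 1 →
      fderiv ℝ (fun x =>
          Ld (qs k) (qs (k + 1)) (Function.update (qf k) 0 x) +
            Ld (qs (k - 1)) (qs k) (Function.update (qf (k - 1)) (Fin.last p) x))
        (qf k 0) = 0)
    (hDELfm : ∀ k, k ≤ N - 1 → ∀ m : Fin (p + 1), 1 ≤ (m : ℕ) → (m : ℕ) ≤ p - 1 →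
      fderiv ℝ (fun x => Ld (qs k) (qs (k + 1)) (Function.update (qf k) m x))
        (qf k m) = 0) :
    ∀ k, 1 ≤ k → k ≤ N - 1 →
      discreteMomentumMap ns nf p Ld
          (fun q => deriv (fun a => φs a q) 0) (fun q => deriv (fun a => φf a q) 0)
          qs qf k =
        discreteMomentumMap ns nf p Ld
          (fun q => deriv (fun a => φs a q) 0) (fun q => deriv (fun a => φf a q) 0)
          qs qf (k + 1) := by
  intro k hk1 hk2
  set L : (Fin ns → ℝ) × (Fin ns → ℝ) × (Fin (p + 1) → Fin nf → ℝ) → ℝ :=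
    fun q => Ld q.1 q.2.1 q.2.2 with hLdef
  set ξs : (Fin ns → ℝ) → (Fin ns → ℝ) := fun q => deriv (fun a => φs a q) 0 with hξs
  set ξf : (Fin nf → ℝ) → (Fin nf → ℝ) := fun q => deriv (fun a => φf a q) 0 with hξf
  -- derivatives of the flows
  have hds : ∀ x : Fin ns → ℝ, HasDerivAt (fun a => φs a x) (ξs x) 0 := by
    intro x
    have : Differentiable ℝ (fun a : ℝ => φs a x) :=
      (hφs_smooth.differentiable (by simp)).comp (differentiable_id.prodMk (differentiable_const x))
    exact (this 0).hasDerivAt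
  have hdf : ∀ x : Fin nf → ℝ, HasDerivAt (fun a => φf a x) (ξf x) 0 := by
    intro x
    have : Differentiable ℝ (fun a : ℝ => φf a x) :=
      (hφf_smooth.differentiable (by simp)).comp (differentiable_id.prodMk (differentiable_const x))
    exact (this 0).hasDerivAt
  -- the Noether identity at an arbitrary point
  have key : ∀ (x y : Fin ns → ℝ) (z : Fin (p + 1) → Fin nf → ℝ),
      fderiv ℝ L (x, y, z) (ξs x, ξs y, fun m => ξf (z m)) = 0 := by
    intro x y z
    have hgz : HasDerivAt (fun a => (φs a x, φs a y, fun m => φf a (z m)))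
        (ξs x, ξs y, fun m => ξf (z m)) 0 :=
      (hds x).prodMk ((hds y).prodMk (hasDerivAt_pi.2 fun m => hdf (z m)))
    have h0 : ((φs 0 x, φs 0 y, fun m => φf 0 (z m)) :
        (Fin ns → ℝ) × (Fin ns → ℝ) × (Fin (p + 1) → Fin nf → ℝ)) = (x, y, z) := by
      simp [Prod.ext_iff, hφs_zero, hφf_zero]
    have hL : HasFDerivAt L (fderiv ℝ L (x, y, z)) (φs 0 x, φs 0 y, fun m => φf 0 (z m)) := by
      rw [h0]; exact (hLd (x, y, z)).hasFDerivAt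
    have hcomp : HasDerivAt (fun a => Ld (φs a x) (φs a y) (fun m => φf a (z m)))
        (fderiv ℝ L (x, y, z) (ξs x, ξs y, fun m => ξf (z m))) 0 :=
      by have := hL.comp_hasDerivAt 0 hgz; exact this
    have hconst : HasDerivAt (fun a => Ld (φs a x) (φs a y) (fun m => φf a (z m)))
        0 0 := by
      have he : (fun a : ℝ => Ld (φs a x) (φs a y) (fun m => φf a (z m)))
          = fun _ => Ld x y z := funext fun a => hinv a x y z
      rw [he]; exact hasDerivAt_const 0 _
    exact hcomp.unique hconst
  set A := fderiv ℝ L (qs k, qs (k + 1), qf k) with hA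
  set B := fderiv ℝ L (qs (k - 1), qs k, qf (k - 1)) with hB
  have hid0 : qf (k - 1) (Fin.last p) = qf k 0 := by
    have h := hid (k - 1)
    have hk : k - 1 + 1 = k := by omega
    rwa [hk] at h
  -- translate the partial derivatives appearing in DEL and in the momentum map
  have e2B : fderiv ℝ (fun x => Ld (qs (k - 1)) x (qf (k - 1))) (qs k) (ξs (qs k))
      = B (0, ξs (qs k), 0) := aux_partial2 L _ _ _ (hLd _) _
  have e2A : fderiv ℝ (fun x => Ld (qs k) x (qf k)) (qs (k + 1)) (ξs (qs (k + 1)))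
      = A (0, ξs (qs (k + 1)), 0) := aux_partial2 L _ _ _ (hLd _) _
  have e3B : fderiv ℝ (fun x => Ld (qs (k - 1)) (qs k)
        (Function.update (qf (k - 1)) (Fin.last p) x)) (qf (k - 1) (Fin.last p))
        (ξf (qf (k - 1) (Fin.last p)))
      = B (0, 0, Pi.single (Fin.last p) (ξf (qf (k - 1) (Fin.last p)))) :=
    aux_partial3 L _ _ _ (hLd _) _ _
  have e3A : fderiv ℝ (fun x => Ld (qs k) (qs (k + 1))
        (Function.update (qf k) (Fin.last p) x)) (qf k (Fin.last p))
        (ξf (qf k (Fin.last p)))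
      = A (0, 0, Pi.single (Fin.last p) (ξf (qf k (Fin.last p)))) :=
    aux_partial3 L _ _ _ (hLd _) _ _
  -- the slow DEL equation, applied to ξs (qs k)
  have hS : A (ξs (qs k), 0, 0) + B (0, ξs (qs k), 0) = 0 := by
    have hf : DifferentiableAt ℝ (fun x => Ld x (qs (k + 1)) (qf k)) (qs k) :=
      (hLd _).comp _ (differentiableAt_id.prodMk (differentiableAt_const (qs (k + 1), qf k)))
    have hg : DifferentiableAt ℝ (fun x => Ld (qs (k - 1)) x (qf (k - 1))) (qs k) :=
      (hLd _).comp _ ((differentiableAt_const _).prodMk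
        (differentiableAt_id.prodMk (differentiableAt_const _)))
    have h := hDELs k hk1 hk2
    rw [fderiv_fun_add hf hg] at h
    have h' := DFunLike.congr_fun h (ξs (qs k))
    rw [ContinuousLinearMap.add_apply, ContinuousLinearMap.zero_apply] at h'
    have e1 : fderiv ℝ (fun x => Ld x (qs (k + 1)) (qf k)) (qs k) (ξs (qs k))
        = A (ξs (qs k), 0, 0) := aux_partial1 L _ _ _ (hLd _) _
    rw [e1, e2B] at h'
    exact h'
  -- the fast boundary DEL equation, applied to ξf (qf k 0)
  have hF : A (0, 0, Pi.single 0 (ξf (qf k 0)))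
      + B (0, 0, Pi.single (Fin.last p) (ξf (qf k 0))) = 0 := by
    have hupd1 : DifferentiableAt ℝ
        (fun u => Function.update (qf k) (0 : Fin (p + 1)) u) (qf k 0) :=
      (hasFDerivAt_update (i := (0 : Fin (p + 1))) (qf k) (qf k 0)).differentiableAt
    have hupd2 : DifferentiableAt ℝ
        (fun u => Function.update (qf (k - 1)) (Fin.last p) u) (qf k 0) := by
      rw [← hid0]
      exact (hasFDerivAt_update (i := Fin.last p) (qf (k - 1))
        (qf (k - 1) (Fin.last p))).differentiableAt
    have hf : DifferentiableAt ℝ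
        (fun u => Ld (qs k) (qs (k + 1)) (Function.update (qf k) 0 u)) (qf k 0) :=
      (hLd _).comp _ ((differentiableAt_const _).prodMk
        ((differentiableAt_const _).prodMk hupd1))
    have hg : DifferentiableAt ℝ
        (fun u => Ld (qs (k - 1)) (qs k)
          (Function.update (qf (k - 1)) (Fin.last p) u)) (qf k 0) :=
      (hLd _).comp _ ((differentiableAt_const _).prodMk
        ((differentiableAt_const _).prodMk hupd2))
    have h := hDELf0 k hk1 hk2
    rw [fderiv_fun_add hf hg] at h
    have h' := DFunLike.congr_fun h (ξf (qf k 0))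
    rw [ContinuousLinearMap.add_apply, ContinuousLinearMap.zero_apply] at h'
    have e1 : fderiv ℝ (fun u => Ld (qs k) (qs (k + 1)) (Function.update (qf k) 0 u))
        (qf k 0) (ξf (qf k 0)) = A (0, 0, Pi.single 0 (ξf (qf k 0))) :=
      aux_partial3 L _ _ _ (hLd _) 0 _
    have e2 : fderiv ℝ (fun u => Ld (qs (k - 1)) (qs k)
          (Function.update (qf (k - 1)) (Fin.last p) u)) (qf k 0) (ξf (qf k 0))
        = B (0, 0, Pi.single (Fin.last p) (ξf (qf k 0))) := by
      rw [← hid0]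
      exact aux_partial3 L _ _ _ (hLd _) _ _
    rw [e1, e2] at h'
    exact h'
  -- interior fast DEL equations kill the middle terms
  have hM : ∀ m : Fin (p + 1), m ≠ 0 → m ≠ Fin.last p →
      A (0, 0, Pi.single m (ξf (qf k m))) = 0 := by
    intro m hm0 hml
    have hm1 : 1 ≤ (m : ℕ) := by
      rcases Nat.eq_zero_or_pos (m : ℕ) with h | h
      · exact absurd (Fin.ext h) hm0
      · exact h
    have hm2 : (m : ℕ) ≤ p - 1 := by
      have hlt : (m : ℕ) < p + 1 := m.isLt
      have hne : (m : ℕ) ≠ p := fun h => hml (Fin.ext (by simpa [Fin.last] using h))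
      omega
    have h := hDELfm k hk2 m hm1 hm2
    have h' := DFunLike.congr_fun h (ξf (qf k m))
    rw [ContinuousLinearMap.zero_apply] at h'
    have e1 : fderiv ℝ (fun u => Ld (qs k) (qs (k + 1)) (Function.update (qf k) m u))
        (qf k m) (ξf (qf k m)) = A (0, 0, Pi.single m (ξf (qf k m))) :=
      aux_partial3 L _ _ _ (hLd _) _ _
    rw [e1] at h'
    exact h'
  -- decompose the Noether identity at (qs k, qs (k+1), qf k)
  have hkey := key (qs k) (qs (k + 1)) (qf k)
  have hdecomp : ((ξs (qs k), ξs (qs (k + 1)), fun m => ξf (qf k m)) :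
      (Fin ns → ℝ) × (Fin ns → ℝ) × (Fin (p + 1) → Fin nf → ℝ))
      = (ξs (qs k), 0, 0) + (0, ξs (qs (k + 1)), 0) + (0, 0, fun m => ξf (qf k m)) := by
    simp [Prod.ext_iff]
  rw [hdecomp, map_add, map_add] at hkey
  have hsum : A (0, 0, fun m => ξf (qf k m))
      = ∑ m, A (0, 0, Pi.single m (ξf (qf k m))) :=
    aux_sum3 L _ _ _ _
  have hne0l : (0 : Fin (p + 1)) ≠ Fin.last p := by
    intro h
    have := congrArg Fin.val h
    simp [Fin.last] at this
    omega
  have hsplit : ∑ m, A (0, 0, Pi.single m (ξf (qf k m)))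
      = A (0, 0, Pi.single 0 (ξf (qf k 0)))
        + A (0, 0, Pi.single (Fin.last p) (ξf (qf k (Fin.last p)))) := by
    have hss : ∑ m ∈ ({0, Fin.last p} : Finset (Fin (p + 1))),
          A (0, 0, Pi.single m (ξf (qf k m)))
        = ∑ m, A (0, 0, Pi.single m (ξf (qf k m))) := by
      refine Finset.sum_subset (Finset.subset_univ _) ?_
      intro m _ hm
      simp only [Finset.mem_insert, Finset.mem_singleton, not_or] at hm
      exact hM m hm.1 hm.2
    rw [← hss, Finset.sum_pair hne0l]
  rw [hsum, hsplit] at hkey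
  -- conclude
  show discreteMomentumMap ns nf p Ld ξs ξf qs qf k
    = discreteMomentumMap ns nf p Ld ξs ξf qs qf (k + 1)
  unfold discreteMomentumMap
  rw [Nat.add_sub_cancel]
  rw [e2B, e2A, e3B, e3A, hid0]
  linarith [hS, hF, hkey]
end

section
/- Fix integers n_s, n_f ≥ 1, p ≥ 1, N ≥ 2 and a differentiable discrete Lagrangian L_d : ℝ^{n_s} × ℝ^{n_s} × (ℝ^{n_f})^{p+1} → ℝ. Define the discrete action S_d = Σ_{k=0}^{N−1} L_d(q_k^s, q_{k+1}^s, q_k^{f,0}, …, q_k^{f,p}) as a function of the free variables q_0^s, …, q_N^s ∈ ℝ^{n_s} and q_k^{f,m} ∈ ℝ^{n_f} (k = 0,…,N−1, m = 0,…,p) subject to the identification q_{k−1}^{f,p} = q_k^{f,0} for k = 1,…,N−1. Then the partial derivatives of S_d with respect to all interior variables — q_k^s for k = 1,…,N−1, the identified nodes q_k^{f,0} (= q_{k−1}^{f,p}) for k = 1,…,N−1, and q_k^{f,m} for k = 0,…,N−1, m = 1,…,p−1 — all vanish if and only if the discrete multirate Euler–Lagrange equations hold. -/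
/-- Stationarity of the discrete multirate action
`S_d = Σ_{k=0}^{N−1} L_d(q_k^s, q_{k+1}^s, q_k^f)` with respect to all interior
variables (slow macro nodes, identified fast macro nodes `q_k^{f,0} = q_{k−1}^{f,p}`,
and fast micro nodes) is equivalent to the discrete multirate Euler–Lagrange
equations. -/
theorem discrete_action_stationary_iff_DEL
    (ns nf p N : ℕ) (hns : 1 ≤ ns) (hnf : 1 ≤ nf) (hp : 1 ≤ p) (hN : 2 ≤ N)
    (Ld : (Fin ns → ℝ) → (Fin ns → ℝ) → (Fin (p + 1) → Fin nf → ℝ) → ℝ)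
    (hLd : Differentiable ℝ
      (fun x : (Fin ns → ℝ) × (Fin ns → ℝ) × (Fin (p + 1) → Fin nf → ℝ) =>
        Ld x.1 x.2.1 x.2.2))
    (qs : ℕ → Fin ns → ℝ) (qf : ℕ → Fin (p + 1) → Fin nf → ℝ)
    (hid : ∀ k, qf k (Fin.last p) = qf (k + 1) 0) :
    -- stationarity of the discrete action w.r.t. all interior variables …
    ((∀ k, 1 ≤ k → k ≤ N - 1 →
        fderiv ℝ (fun x => ∑ j ∈ Finset.range N,
            Ld (Function.update qs k x j) (Function.update qs k x (j + 1)) (qf j))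
          (qs k) = 0) ∧
      (∀ k, 1 ≤ k → k ≤ N - 1 →
        fderiv ℝ (fun x => ∑ j ∈ Finset.range N,
            Ld (qs j) (qs (j + 1))
              (Function.update
                (Function.update qf k (Function.update (qf k) 0 x))
                (k - 1) (Function.update (qf (k - 1)) (Fin.last p) x) j))
          (qf k 0) = 0) ∧
      (∀ k, k ≤ N - 1 → ∀ m : Fin (p + 1), 1 ≤ (m : ℕ) → (m : ℕ) ≤ p - 1 →
        fderiv ℝ (fun x => ∑ j ∈ Finset.range N,
            Ld (qs j) (qs (j + 1))
              (Function.update qf k (Function.update (qf k) m x) j))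
          (qf k m) = 0))
    ↔
    -- … holds iff the discrete multirate Euler–Lagrange equations hold
    ((∀ k, 1 ≤ k → k ≤ N - 1 →
        fderiv ℝ (fun x => Ld x (qs (k + 1)) (qf k) + Ld (qs (k - 1)) x (qf (k - 1)))
          (qs k) = 0) ∧
      (∀ k, 1 ≤ k → k ≤ N - 1 →
        fderiv ℝ (fun x =>
            Ld (qs k) (qs (k + 1)) (Function.update (qf k) 0 x) +
              Ld (qs (k - 1)) (qs k) (Function.update (qf (k - 1)) (Fin.last p) x))
          (qf k 0) = 0) ∧
      (∀ k, k ≤ N - 1 → ∀ m : Fin (p + 1), 1 ≤ (m : ℕ) → (m : ℕ) ≤ p - 1 →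
        fderiv ℝ (fun x => Ld (qs k) (qs (k + 1)) (Function.update (qf k) m x))
          (qf k m) = 0)) := by
  have hkey1 : ∀ k, 1 ≤ k → k ≤ N - 1 →
      (fun x => ∑ j ∈ Finset.range N,
          Ld (Function.update qs k x j) (Function.update qs k x (j + 1)) (qf j))
        = fun x => (Ld x (qs (k + 1)) (qf k) + Ld (qs (k - 1)) x (qf (k - 1)))
            + ∑ j ∈ ((Finset.range N).erase k).erase (k - 1),
                Ld (qs j) (qs (j + 1)) (qf j) := by
    intro k hk1 hk2
    have hmemk : k ∈ Finset.range N := by rw [Finset.mem_range]; omega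
    have hmemk1 : k - 1 ∈ (Finset.range N).erase k := by
      rw [Finset.mem_erase, Finset.mem_range]; omega
    funext x
    rw [← Finset.add_sum_erase _ _ hmemk, ← Finset.add_sum_erase _ _ hmemk1]
    have h1 : k + 1 ≠ k := by omega
    have h2 : k - 1 ≠ k := by omega
    have h3 : k - 1 + 1 = k := by omega
    rw [Function.update_self, Function.update_of_ne h1, Function.update_of_ne h2,
      h3, Function.update_self, add_assoc]
    congr 2
    refine Finset.sum_congr rfl fun j hj => ?_
    simp only [Finset.mem_erase, Finset.mem_range] at hj
    have hj1 : j ≠ k := hj.2.1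
    have hj2 : j + 1 ≠ k := by omega
    rw [Function.update_of_ne hj1, Function.update_of_ne hj2]
  have hkey2 : ∀ k, 1 ≤ k → k ≤ N - 1 →
      (fun x => ∑ j ∈ Finset.range N,
          Ld (qs j) (qs (j + 1))
            (Function.update
              (Function.update qf k (Function.update (qf k) 0 x))
              (k - 1) (Function.update (qf (k - 1)) (Fin.last p) x) j))
        = fun x => (Ld (qs k) (qs (k + 1)) (Function.update (qf k) 0 x) +
              Ld (qs (k - 1)) (qs k) (Function.update (qf (k - 1)) (Fin.last p) x))
            + ∑ j ∈ ((Finset.range N).erase k).erase (k - 1),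
                Ld (qs j) (qs (j + 1)) (qf j) := by
    intro k hk1 hk2
    have hmemk : k ∈ Finset.range N := by rw [Finset.mem_range]; omega
    have hmemk1 : k - 1 ∈ (Finset.range N).erase k := by
      rw [Finset.mem_erase, Finset.mem_range]; omega
    funext x
    rw [← Finset.add_sum_erase _ _ hmemk, ← Finset.add_sum_erase _ _ hmemk1]
    have h1 : k ≠ k - 1 := by omega
    have h3 : k - 1 + 1 = k := by omega
    rw [Function.update_of_ne h1, Function.update_self, Function.update_self, h3,
      add_assoc]
    congr 2
    refine Finset.sum_congr rfl fun j hj => ?_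
    simp only [Finset.mem_erase, Finset.mem_range] at hj
    have hj1 : j ≠ k := hj.2.1
    have hj2 : j ≠ k - 1 := hj.1
    rw [Function.update_of_ne hj2, Function.update_of_ne hj1]
  have hkey3 : ∀ k, k ≤ N - 1 → ∀ m : Fin (p + 1),
      (fun x => ∑ j ∈ Finset.range N,
          Ld (qs j) (qs (j + 1))
            (Function.update qf k (Function.update (qf k) m x) j))
        = fun x => Ld (qs k) (qs (k + 1)) (Function.update (qf k) m x)
            + ∑ j ∈ (Finset.range N).erase k, Ld (qs j) (qs (j + 1)) (qf j) := by
    intro k hk2 m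
    have hmemk : k ∈ Finset.range N := by rw [Finset.mem_range]; omega
    funext x
    rw [← Finset.add_sum_erase _ _ hmemk, Function.update_self]
    congr 1
    refine Finset.sum_congr rfl fun j hj => ?_
    simp only [Finset.mem_erase, Finset.mem_range] at hj
    rw [Function.update_of_ne hj.1]
  refine and_congr ?_ (and_congr ?_ ?_)
  · refine forall_congr' fun k => forall_congr' fun hk1 => forall_congr' fun hk2 => ?_
    rw [hkey1 k hk1 hk2, fderiv_add_const]
  · refine forall_congr' fun k => forall_congr' fun hk1 => forall_congr' fun hk2 => ?_
    rw [hkey2 k hk1 hk2, fderiv_add_const]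
  · refine forall_congr' fun k => forall_congr' fun hk2 => forall_congr' fun m =>
      forall_congr' fun hm1 => forall_congr' fun hm2 => ?_
    rw [hkey3 k hk2 m, fderiv_add_const]
end

section
/- (Midpoint fast, midpoint slow scheme.) In the multirate setting, let the discrete Lagrangian be L_d = T_d − V_d − W_d with V_d(q_k^s,q_{k+1}^s,q_k^f) = Δt Σ_{m=0}^{p−1} V(q̄_k^{s,m}, q̄_k^{f,m}) and W_d(q_k^f) = Δt Σ_{m=0}^{p−1} W(q̄_k^{f,m}). Then a discrete trajectory satisfies the discrete multirate Euler–Lagrange equations if and only if there exist momenta p_k^s ∈ ℝ^{n_s} (k = 0,…,N) and p_k^{f,m} ∈ ℝ^{n_f} (k = 0,…,N−1, m = 0,…,p, with p_{k−1}^{f,p} = p_k^{f,0}) such that for all k and m = 0,…,p−1: (i) q_{k+1}^s = q_k^s + (ΔT/2)(Mˢ)⁻¹(p_k^s + p_{k+1}^s − Δt Σ_{m=0}^{p−1}(1 − (2m+1)/p) ∂_{q^s}V(q̄_k^{s,m}, q̄_k^{f,m})); (ii) p_{k+1}^s = p_k^s − Δt Σ_{m=0}^{p−1} ∂_{q^s}V(q̄_k^{s,m},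 q̄_k^{f,m}); (iii) q_k^{f,m+1} = q_k^{f,m} + Δt (Mᶠ)⁻¹ (p_k^{f,m} + p_k^{f,m+1})/2; (iv) p_k^{f,m+1} = p_k^{f,m} − Δt ∂_{q^f}V(q̄_k^{s,m}, q̄_k^{f,m}) − Δt ∇W(q̄_k^{f,m}). -/
open Matrix Finset

/-- Partial gradient of the slow potential `V` with respect to the slow variable. -/
noncomputable def gradVs {ns nf : ℕ} (V : (Fin ns → ℝ) → (Fin nf → ℝ) → ℝ)
    (a : Fin ns → ℝ) (b : Fin nf → ℝ) : Fin ns → ℝ :=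
  fun i => fderiv ℝ (fun x => V x b) a (Pi.single i 1)

/-- Partial gradient of the slow potential `V` with respect to the fast variable. -/
noncomputable def gradVf {ns nf : ℕ} (V : (Fin ns → ℝ) → (Fin nf → ℝ) → ℝ)
    (a : Fin ns → ℝ) (b : Fin nf → ℝ) : Fin nf → ℝ :=
  fun j => fderiv ℝ (fun y => V a y) b (Pi.single j 1)

/-- Gradient of the fast potential `W`. -/
noncomputable def gradW {nf : ℕ} (W : (Fin nf → ℝ) → ℝ) (b : Fin nf → ℝ) :
    Fin nf → ℝ :=
  fun j => fderiv ℝ W b (Pi.single j 1)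

/-- Linear interpolation of the slow variable at micro node `m`:
`q^{s,m} = a + (m/p)(b − a)`. -/
noncomputable def slowInterp {ns : ℕ} (p : ℕ) (a b : Fin ns → ℝ) (m : ℕ) : Fin ns → ℝ :=
  a + ((m : ℝ) / (p : ℝ)) • (b - a)

/-- Discrete kinetic energy on one macro interval. -/
noncomputable def Tdisc {ns nf : ℕ} (p : ℕ) (Δt : ℝ)
    (Ms : Matrix (Fin ns) (Fin ns) ℝ) (Mf : Matrix (Fin nf) (Fin nf) ℝ)
    (a b : Fin ns → ℝ) (qf : ℕ → Fin nf → ℝ) : ℝ :=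
  (1 / (2 * ((p : ℝ) * Δt))) * ((b - a) ⬝ᵥ Ms.mulVec (b - a)) +
    ∑ m ∈ range p,
      (1 / (2 * Δt)) * ((qf (m + 1) - qf m) ⬝ᵥ Mf.mulVec (qf (m + 1) - qf m))

/-- Discrete multirate Lagrangian with midpoint quadrature for both the slow
and the fast potential. -/
noncomputable def LdMidMid {ns nf : ℕ} (p : ℕ) (Δt : ℝ)
    (Ms : Matrix (Fin ns) (Fin ns) ℝ) (Mf : Matrix (Fin nf) (Fin nf) ℝ)
    (V : (Fin ns → ℝ) → (Fin nf → ℝ) → ℝ) (W : (Fin nf → ℝ) → ℝ)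
    (a b : Fin ns → ℝ) (qf : ℕ → Fin nf → ℝ) : ℝ :=
  Tdisc p Δt Ms Mf a b qf -
    Δt * ∑ m ∈ range p,
      V (((1 : ℝ) / 2) • (slowInterp p a b m + slowInterp p a b (m + 1)))
        (((1 : ℝ) / 2) • (qf m + qf (m + 1))) -
    Δt * ∑ m ∈ range p, W (((1 : ℝ) / 2) • (qf m + qf (m + 1)))



variable {n : ℕ}

/-- dot-product continuous linear functional -/
noncomputable def dpL (w : Fin n → ℝ) : (Fin n → ℝ) →L[ℝ] ℝ :=
  LinearMap.toContinuousLinearMap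
    { toFun := fun v => w ⬝ᵥ v
      map_add' := fun a b => by simp [dotProduct_add]
      map_smul' := fun c a => by simp [dotProduct_smul] }

@[simp] lemma dpL_apply (w v : Fin n → ℝ) : dpL w v = w ⬝ᵥ v := rfl

lemma clm_eq_dpL (L : (Fin n → ℝ) →L[ℝ] ℝ) : L = dpL (fun i => L (Pi.single i 1)) := by
  ext v
  have hv : v = ∑ i : Fin n, v i • (Pi.single i 1 : Fin n → ℝ) := by
    funext j; simp [Finset.sum_apply, Pi.single_apply]
  conv_lhs => rw [hv]
  simp [map_sum, dotProduct, mul_comm]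

lemma dpL_eq_zero_iff (w : Fin n → ℝ) : dpL w = 0 ↔ w = 0 := by
  constructor
  · intro h; funext i
    have := congrArg (fun L : (Fin n → ℝ) →L[ℝ] ℝ => L (Pi.single i 1)) h
    simpa [dotProduct_single] using this
  · rintro rfl; ext v; simp

lemma hasFDerivAt_dpL (w : Fin n → ℝ) (q : Fin n → ℝ) :
    HasFDerivAt (fun x : Fin n → ℝ => w ⬝ᵥ x) (dpL w) q := (dpL w).hasFDerivAt

lemma hasFDerivAt_quad (M : Matrix (Fin n) (Fin n) ℝ) (hM : Mᵀ = M) (q : Fin n → ℝ) :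
    HasFDerivAt (fun x : Fin n → ℝ => x ⬝ᵥ M.mulVec x) (dpL ((2:ℝ) • M.mulVec q)) q := by
  have h : ∀ i : Fin n, HasFDerivAt (fun x : Fin n → ℝ => x i * M.mulVec x i)
      ((fun x : Fin n → ℝ => x i) q • dpL (M i) +
        (fun x : Fin n → ℝ => M.mulVec x i) q • dpL (Pi.single i 1)) q := by
    intro i
    have h1 : HasFDerivAt (fun x : Fin n → ℝ => x i) (dpL (Pi.single i 1)) q := by
      have := hasFDerivAt_dpL (Pi.single i (1:ℝ)) q
      simpa [single_dotProduct] using this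
    have h2 : HasFDerivAt (fun x : Fin n → ℝ => M.mulVec x i) (dpL (M i)) q :=
      hasFDerivAt_dpL (M i) q
    exact h1.mul h2
  have hsum := HasFDerivAt.fun_sum (fun i (_ : i ∈ Finset.univ) => h i)
  have hfun : (fun x : Fin n → ℝ => x ⬝ᵥ M.mulVec x) =
      fun x : Fin n → ℝ => ∑ i ∈ Finset.univ, x i * M.mulVec x i := by
    funext x; rfl
  rw [hfun]
  refine hsum.congr_fderiv ?_
  ext v
  simp only [ContinuousLinearMap.sum_apply, ContinuousLinearMap.add_apply,
    ContinuousLinearMap.smul_apply, dpL_apply, smul_eq_mul,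
    single_dotProduct, one_mul]
  have hqv : q ⬝ᵥ M.mulVec v = M.mulVec q ⬝ᵥ v := by
    rw [Matrix.dotProduct_mulVec, ← Matrix.vecMul_transpose, hM]
  rw [Finset.sum_add_distrib]
  have h1 : ∑ i : Fin n, q i * (M i ⬝ᵥ v) = q ⬝ᵥ M.mulVec v := rfl
  have h2 : ∑ i : Fin n, M.mulVec q i * v i = M.mulVec q ⬝ᵥ v := rfl
  rw [h1, h2, hqv, smul_dotProduct, smul_eq_mul]
  ring

/-- derivative of shifted quadratic form `x ↦ (x-c)ᵀ M (x-c)` -/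
lemma hasFDerivAt_quad_shift (M : Matrix (Fin n) (Fin n) ℝ) (hM : Mᵀ = M)
    (c q : Fin n → ℝ) :
    HasFDerivAt (fun x : Fin n → ℝ => (x - c) ⬝ᵥ M.mulVec (x - c))
      (dpL ((2:ℝ) • M.mulVec (q - c))) q := by
  have hin : HasFDerivAt (fun x : Fin n → ℝ => x - c)
      (ContinuousLinearMap.id ℝ (Fin n → ℝ)) q := by
    simpa using (hasFDerivAt_id (𝕜 := ℝ) q).sub_const c
  have h2 := (hasFDerivAt_quad M hM (q - c)).comp q hin
  rw [ContinuousLinearMap.comp_id] at h2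
  exact h2

/-- even symmetry version: `x ↦ (c-x)ᵀ M (c-x)` -/
lemma hasFDerivAt_quad_shift' (M : Matrix (Fin n) (Fin n) ℝ) (hM : Mᵀ = M)
    (c q : Fin n → ℝ) :
    HasFDerivAt (fun x : Fin n → ℝ => (c - x) ⬝ᵥ M.mulVec (c - x))
      (dpL ((2:ℝ) • M.mulVec (q - c))) q := by
  have hfun : (fun x : Fin n → ℝ => (c - x) ⬝ᵥ M.mulVec (c - x)) =
      fun x : Fin n → ℝ => (x - c) ⬝ᵥ M.mulVec (x - c) := by
    funext x
    have : c - x = -(x - c) := by abel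
    rw [this, Matrix.mulVec_neg, neg_dotProduct, dotProduct_neg, neg_neg]
  rw [hfun]; exact hasFDerivAt_quad_shift M hM c q

/-- composition with an affine map `x ↦ γ•x + c` -/
lemma HasFDerivAt.comp_affine {f : (Fin n → ℝ) → ℝ} {w : Fin n → ℝ} (γ : ℝ)
    (c q : Fin n → ℝ) (hf : HasFDerivAt f (dpL w) (γ • q + c)) :
    HasFDerivAt (fun x : Fin n → ℝ => f (γ • x + c)) (dpL (γ • w)) q := by
  have hin : HasFDerivAt (fun x : Fin n → ℝ => γ • x + c)
      (γ • ContinuousLinearMap.id ℝ (Fin n → ℝ)) q := by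
    simpa using ((hasFDerivAt_id (𝕜 := ℝ) q).const_smul γ).add_const c
  have h2 := hf.comp q hin
  have hco : (dpL w).comp (γ • ContinuousLinearMap.id ℝ (Fin n → ℝ)) = dpL (γ • w) := by
    ext v
    simp [smul_dotProduct, dotProduct_smul, smul_eq_mul, mul_comm]
  rw [hco] at h2
  exact h2

lemma dpL_add (u v : Fin n → ℝ) : dpL (u + v) = dpL u + dpL v := by
  ext x; simp [add_dotProduct]

lemma dpL_smul (c : ℝ) (u : Fin n → ℝ) : dpL (c • u) = c • dpL u := by
  ext x; simp [smul_dotProduct]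

lemma dpL_sub (u v : Fin n → ℝ) : dpL (u - v) = dpL u - dpL v := by
  ext x; simp [sub_dotProduct]

lemma dpL_sum {ι : Type*} (s : Finset ι) (f : ι → Fin n → ℝ) :
    dpL (∑ i ∈ s, f i) = ∑ i ∈ s, dpL (f i) := by
  ext x
  simp only [dpL_apply, ContinuousLinearMap.sum_apply, dotProduct,
    Finset.sum_apply, Finset.sum_mul]
  exact Finset.sum_comm

variable {ns nf : ℕ}

lemma hasFDerivAt_Vs {V : (Fin ns → ℝ) → (Fin nf → ℝ) → ℝ}
    (hV : ContDiff ℝ 1 (fun x : (Fin ns → ℝ) × (Fin nf → ℝ) => V x.1 x.2))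
    (a : Fin ns → ℝ) (b : Fin nf → ℝ) :
    HasFDerivAt (fun x => V x b) (dpL (gradVs V a b)) a := by
  have hD : DifferentiableAt ℝ (fun x => V x b) a := by
    have h1 : DifferentiableAt ℝ (fun x : (Fin ns → ℝ) × (Fin nf → ℝ) => V x.1 x.2) (a, b) :=
      (hV.differentiable one_ne_zero).differentiableAt
    exact h1.comp a (DifferentiableAt.prodMk (differentiableAt_id (𝕜 := ℝ) (x := a)) (differentiableAt_const b))
  have h2 := hD.hasFDerivAt
  rwa [clm_eq_dpL (fderiv ℝ (fun x => V x b) a)] at h2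

lemma hasFDerivAt_Vf {V : (Fin ns → ℝ) → (Fin nf → ℝ) → ℝ}
    (hV : ContDiff ℝ 1 (fun x : (Fin ns → ℝ) × (Fin nf → ℝ) => V x.1 x.2))
    (a : Fin ns → ℝ) (b : Fin nf → ℝ) :
    HasFDerivAt (fun y => V a y) (dpL (gradVf V a b)) b := by
  have hD : DifferentiableAt ℝ (fun y => V a y) b := by
    have h1 : DifferentiableAt ℝ (fun x : (Fin ns → ℝ) × (Fin nf → ℝ) => V x.1 x.2) (a, b) :=
      (hV.differentiable one_ne_zero).differentiableAt
    exact h1.comp b (DifferentiableAt.prodMk (differentiableAt_const a) differentiableAt_id)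
  have h2 := hD.hasFDerivAt
  rwa [clm_eq_dpL (fderiv ℝ (fun y => V a y) b)] at h2

lemma hasFDerivAt_W {W : (Fin nf → ℝ) → ℝ} (hW : ContDiff ℝ 1 W) (b : Fin nf → ℝ) :
    HasFDerivAt W (dpL (gradW W b)) b := by
  have h2 := ((hW.differentiable one_ne_zero) b).hasFDerivAt
  rwa [clm_eq_dpL (fderiv ℝ W b)] at h2

lemma mS_affine_left {ns : ℕ} (p : ℕ) (hp : 1 ≤ p) (b x : Fin ns → ℝ) (m : ℕ) :
    ((1:ℝ)/2) • (slowInterp p x b m + slowInterp p x b (m+1)) =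
      (1 - (2*(m:ℝ)+1)/(2*(p:ℝ))) • x + ((2*(m:ℝ)+1)/(2*(p:ℝ))) • b := by
  have hp0 : (p:ℝ) ≠ 0 := Nat.cast_ne_zero.mpr (by omega)
  unfold slowInterp
  push_cast
  match_scalars <;> field_simp <;> ring

lemma mS_affine_right {ns : ℕ} (p : ℕ) (hp : 1 ≤ p) (a x : Fin ns → ℝ) (m : ℕ) :
    ((1:ℝ)/2) • (slowInterp p a x m + slowInterp p a x (m+1)) =
      ((2*(m:ℝ)+1)/(2*(p:ℝ))) • x + (1 - (2*(m:ℝ)+1)/(2*(p:ℝ))) • a := by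
  have hp0 : (p:ℝ) ≠ 0 := Nat.cast_ne_zero.mpr (by omega)
  unfold slowInterp
  push_cast
  match_scalars <;> field_simp <;> ring

section main

variable {ns nf : ℕ} {p : ℕ} {Δt : ℝ}
  {Ms : Matrix (Fin ns) (Fin ns) ℝ} {Mf : Matrix (Fin nf) (Fin nf) ℝ}
  {V : (Fin ns → ℝ) → (Fin nf → ℝ) → ℝ} {W : (Fin nf → ℝ) → ℝ}

lemma hasFDerivAt_Ld_slot1 (hp : 1 ≤ p) (hΔt : 0 < Δt) (hMs' : Msᵀ = Ms)
    (hV : ContDiff ℝ 1 (fun x : (Fin ns → ℝ) × (Fin nf → ℝ) => V x.1 x.2))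
    (a b : Fin ns → ℝ) (z : ℕ → Fin nf → ℝ) :
    HasFDerivAt (fun x => LdMidMid p Δt Ms Mf V W x b z)
      (dpL ((1/((p:ℝ)*Δt)) • Ms.mulVec (a - b) -
        Δt • ∑ m ∈ range p, (1 - (2*(m:ℝ)+1)/(2*(p:ℝ))) •
          gradVs V (((1:ℝ)/2) • (slowInterp p a b m + slowInterp p a b (m+1)))
            (((1:ℝ)/2) • (z m + z (m+1))))) a := by
  have hp0 : (p:ℝ) ≠ 0 := Nat.cast_ne_zero.mpr (by omega)
  have hΔ0 : Δt ≠ 0 := ne_of_gt hΔt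
  have hkin : HasFDerivAt (fun x : Fin ns → ℝ => Tdisc p Δt Ms Mf x b z)
      (dpL ((1/((p:ℝ)*Δt)) • Ms.mulVec (a - b))) a := by
    have h1 := (hasFDerivAt_quad_shift' Ms hMs' b a).const_mul (1/(2*((p:ℝ)*Δt)))
    have h2 := h1.add_const (∑ m ∈ range p,
      (1/(2*Δt)) * ((z (m+1) - z m) ⬝ᵥ Mf.mulVec (z (m+1) - z m)))
    have hD : (1/(2*((p:ℝ)*Δt))) • dpL ((2:ℝ) • Ms.mulVec (a - b)) =
        dpL ((1/((p:ℝ)*Δt)) • Ms.mulVec (a - b)) := by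
      rw [← dpL_smul, smul_smul]
      congr 1
      match_scalars
      field_simp
    rw [hD] at h2
    exact h2
  have hVt : ∀ m ∈ range p, HasFDerivAt (fun x : Fin ns → ℝ =>
        V (((1:ℝ)/2) • (slowInterp p x b m + slowInterp p x b (m+1)))
          (((1:ℝ)/2) • (z m + z (m+1))))
      (dpL ((1 - (2*(m:ℝ)+1)/(2*(p:ℝ))) •
        gradVs V (((1:ℝ)/2) • (slowInterp p a b m + slowInterp p a b (m+1)))
          (((1:ℝ)/2) • (z m + z (m+1))))) a := by
    intro m _
    have hfun : (fun x : Fin ns → ℝ =>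
        V (((1:ℝ)/2) • (slowInterp p x b m + slowInterp p x b (m+1)))
          (((1:ℝ)/2) • (z m + z (m+1)))) =
        fun x => V ((1 - (2*(m:ℝ)+1)/(2*(p:ℝ))) • x + ((2*(m:ℝ)+1)/(2*(p:ℝ))) • b)
          (((1:ℝ)/2) • (z m + z (m+1))) := by
      funext x; rw [mS_affine_left p hp b x m]
    rw [hfun]
    have hbase := hasFDerivAt_Vs hV
      ((1 - (2*(m:ℝ)+1)/(2*(p:ℝ))) • a + ((2*(m:ℝ)+1)/(2*(p:ℝ))) • b)
      (((1:ℝ)/2) • (z m + z (m+1)))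
    have hcomp := HasFDerivAt.comp_affine (1 - (2*(m:ℝ)+1)/(2*(p:ℝ)))
      (((2*(m:ℝ)+1)/(2*(p:ℝ))) • b) a hbase
    rw [← mS_affine_left p hp b a m] at hcomp
    exact hcomp
  have hVsum := (HasFDerivAt.fun_sum hVt).const_mul Δt
  have hWconst : HasFDerivAt (fun _ : Fin ns → ℝ =>
      Δt * ∑ m ∈ range p, W (((1:ℝ)/2) • (z m + z (m+1))))
      (0 : (Fin ns → ℝ) →L[ℝ] ℝ) a := hasFDerivAt_const _ _
  have htotal := (hkin.sub hVsum).sub hWconst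
  rw [sub_zero] at htotal
  simp only [dpL_sub, dpL_smul, dpL_sum]
  simp only [dpL_smul] at htotal
  exact htotal

lemma hasFDerivAt_Ld_slot2 (hp : 1 ≤ p) (hΔt : 0 < Δt) (hMs' : Msᵀ = Ms)
    (hV : ContDiff ℝ 1 (fun x : (Fin ns → ℝ) × (Fin nf → ℝ) => V x.1 x.2))
    (a b : Fin ns → ℝ) (z : ℕ → Fin nf → ℝ) :
    HasFDerivAt (fun x => LdMidMid p Δt Ms Mf V W a x z)
      (dpL ((1/((p:ℝ)*Δt)) • Ms.mulVec (b - a) -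
        Δt • ∑ m ∈ range p, ((2*(m:ℝ)+1)/(2*(p:ℝ))) •
          gradVs V (((1:ℝ)/2) • (slowInterp p a b m + slowInterp p a b (m+1)))
            (((1:ℝ)/2) • (z m + z (m+1))))) b := by
  have hp0 : (p:ℝ) ≠ 0 := Nat.cast_ne_zero.mpr (by omega)
  have hΔ0 : Δt ≠ 0 := ne_of_gt hΔt
  have hkin : HasFDerivAt (fun x : Fin ns → ℝ => Tdisc p Δt Ms Mf a x z)
      (dpL ((1/((p:ℝ)*Δt)) • Ms.mulVec (b - a))) b := by
    have h1 := (hasFDerivAt_quad_shift Ms hMs' a b).const_mul (1/(2*((p:ℝ)*Δt)))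
    have h2 := h1.add_const (∑ m ∈ range p,
      (1/(2*Δt)) * ((z (m+1) - z m) ⬝ᵥ Mf.mulVec (z (m+1) - z m)))
    have hD : (1/(2*((p:ℝ)*Δt))) • dpL ((2:ℝ) • Ms.mulVec (b - a)) =
        dpL ((1/((p:ℝ)*Δt)) • Ms.mulVec (b - a)) := by
      rw [← dpL_smul, smul_smul]
      congr 1
      match_scalars
      field_simp
    rw [hD] at h2
    exact h2
  have hVt : ∀ m ∈ range p, HasFDerivAt (fun x : Fin ns → ℝ =>
        V (((1:ℝ)/2) • (slowInterp p a x m + slowInterp p a x (m+1)))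
          (((1:ℝ)/2) • (z m + z (m+1))))
      (dpL (((2*(m:ℝ)+1)/(2*(p:ℝ))) •
        gradVs V (((1:ℝ)/2) • (slowInterp p a b m + slowInterp p a b (m+1)))
          (((1:ℝ)/2) • (z m + z (m+1))))) b := by
    intro m _
    have hfun : (fun x : Fin ns → ℝ =>
        V (((1:ℝ)/2) • (slowInterp p a x m + slowInterp p a x (m+1)))
          (((1:ℝ)/2) • (z m + z (m+1)))) =
        fun x => V (((2*(m:ℝ)+1)/(2*(p:ℝ))) • x + (1 - (2*(m:ℝ)+1)/(2*(p:ℝ))) • a)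
          (((1:ℝ)/2) • (z m + z (m+1))) := by
      funext x; rw [mS_affine_right p hp a x m]
    rw [hfun]
    have hbase := hasFDerivAt_Vs hV
      (((2*(m:ℝ)+1)/(2*(p:ℝ))) • b + (1 - (2*(m:ℝ)+1)/(2*(p:ℝ))) • a)
      (((1:ℝ)/2) • (z m + z (m+1)))
    have hcomp := HasFDerivAt.comp_affine ((2*(m:ℝ)+1)/(2*(p:ℝ)))
      ((1 - (2*(m:ℝ)+1)/(2*(p:ℝ))) • a) b hbase
    rw [← mS_affine_right p hp a b m] at hcomp
    exact hcomp
  have hVsum := (HasFDerivAt.fun_sum hVt).const_mul Δt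
  have hWconst : HasFDerivAt (fun _ : Fin ns → ℝ =>
      Δt * ∑ m ∈ range p, W (((1:ℝ)/2) • (z m + z (m+1))))
      (0 : (Fin ns → ℝ) →L[ℝ] ℝ) b := hasFDerivAt_const _ _
  have htotal := (hkin.sub hVsum).sub hWconst
  rw [sub_zero] at htotal
  simp only [dpL_sub, dpL_smul, dpL_sum]
  simp only [dpL_smul] at htotal
  exact htotal

lemma sum_support_pair {E : Type*} [AddCommMonoid E] {s : Finset ℕ} {f : ℕ → E} {a b : ℕ}
    (hab : a ≠ b) (ha : a ∈ s) (hb : b ∈ s)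
    (h : ∀ c ∈ s, c ≠ a → c ≠ b → f c = 0) : ∑ c ∈ s, f c = f a + f b := by
  have hsub : ({a, b} : Finset ℕ) ⊆ s := by
    intro x hx
    simp only [Finset.mem_insert, Finset.mem_singleton] at hx
    rcases hx with rfl | rfl <;> assumption
  rw [← Finset.sum_subset hsub (fun x hx hx' => h x hx
    (by simp only [Finset.mem_insert, Finset.mem_singleton] at hx'; tauto)
    (by simp only [Finset.mem_insert, Finset.mem_singleton] at hx'; tauto))]
  exact Finset.sum_pair hab

lemma dpL_half {n : ℕ} {c : ℝ} (hc : c ≠ 0) (v : Fin n → ℝ) :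
    (1/(2*c)) • dpL ((2:ℝ) • v) = dpL ((1/c) • v) := by
  rw [← dpL_smul, smul_smul]
  congr 1
  match_scalars
  field_simp

lemma hasFDerivAt_Ld_fast_int (hp : 1 ≤ p) (hΔt : 0 < Δt) (hMf' : Mfᵀ = Mf)
    (hV : ContDiff ℝ 1 (fun x : (Fin ns → ℝ) × (Fin nf → ℝ) => V x.1 x.2))
    (hW : ContDiff ℝ 1 W)
    (a b : Fin ns → ℝ) (z : ℕ → Fin nf → ℝ) (m : ℕ)
    (hm1 : 1 ≤ m) (hmp : m < p) :
    HasFDerivAt (fun x => LdMidMid p Δt Ms Mf V W a b (Function.update z m x))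
      (dpL (((1/Δt) • Mf.mulVec (z m - z (m-1)) + (1/Δt) • Mf.mulVec (z m - z (m+1)))
        - Δt • (((1:ℝ)/2) • gradVf V
              (((1:ℝ)/2) • (slowInterp p a b (m-1) + slowInterp p a b (m-1+1)))
              (((1:ℝ)/2) • (z (m-1) + z (m-1+1))) +
            ((1:ℝ)/2) • gradVf V
              (((1:ℝ)/2) • (slowInterp p a b m + slowInterp p a b (m+1)))
              (((1:ℝ)/2) • (z m + z (m+1))))
        - Δt • (((1:ℝ)/2) • gradW W (((1:ℝ)/2) • (z (m-1) + z (m-1+1))) +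
            ((1:ℝ)/2) • gradW W (((1:ℝ)/2) • (z m + z (m+1)))))) (z m) := by
  have hΔ0 : Δt ≠ 0 := ne_of_gt hΔt
  have hne1 : m + 1 ≠ m := by omega
  have hne2 : m - 1 ≠ m := by omega
  have hmem1 : m - 1 ∈ range p := by simp only [Finset.mem_range]; omega
  have hmem2 : m ∈ range p := by simp only [Finset.mem_range]; omega
  have hm1' : m - 1 + 1 = m := by omega
  -- kinetic part
  set DK : ℕ → (Fin nf → ℝ) →L[ℝ] ℝ := fun m' =>
    if m' = m then dpL ((1/Δt) • Mf.mulVec (z m - z (m+1)))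
    else if m' + 1 = m then dpL ((1/Δt) • Mf.mulVec (z m - z (m-1)))
    else 0 with hDK
  have hterm : ∀ m' ∈ range p, HasFDerivAt (fun x : Fin nf → ℝ =>
      (1/(2*Δt)) * ((Function.update z m x (m'+1) - Function.update z m x m') ⬝ᵥ
        Mf.mulVec (Function.update z m x (m'+1) - Function.update z m x m'))) (DK m') (z m) := by
    intro m' _
    by_cases h1 : m' = m
    · subst h1
      have hfun : (fun x : Fin nf → ℝ =>
          (1/(2*Δt)) * ((Function.update z m' x (m'+1) - Function.update z m' x m') ⬝ᵥ
            Mf.mulVec (Function.update z m' x (m'+1) - Function.update z m' x m'))) =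
          fun x => (1/(2*Δt)) * ((z (m'+1) - x) ⬝ᵥ Mf.mulVec (z (m'+1) - x)) := by
        funext x
        rw [Function.update_self, Function.update_of_ne (by omega : m' + 1 ≠ m')]
      rw [hfun, hDK]
      simp only [if_pos rfl]
      have h := (hasFDerivAt_quad_shift' Mf hMf' (z (m'+1)) (z m')).const_mul (1/(2*Δt))
      rwa [dpL_half hΔ0] at h
    · by_cases h2 : m' + 1 = m
      · have hfun : (fun x : Fin nf → ℝ =>
            (1/(2*Δt)) * ((Function.update z m x (m'+1) - Function.update z m x m') ⬝ᵥ
              Mf.mulVec (Function.update z m x (m'+1) - Function.update z m x m'))) =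
            fun x => (1/(2*Δt)) * ((x - z m') ⬝ᵥ Mf.mulVec (x - z m')) := by
          funext x
          rw [h2, Function.update_self, Function.update_of_ne (by omega : m' ≠ m)]
        rw [hfun, hDK]
        simp only [if_neg h1, if_pos h2]
        have h := (hasFDerivAt_quad_shift Mf hMf' (z m') (z m)).const_mul (1/(2*Δt))
        have hm' : m' = m - 1 := by omega
        rw [hm'] at h ⊢
        rwa [dpL_half hΔ0] at h
      · have hfun : (fun x : Fin nf → ℝ =>
            (1/(2*Δt)) * ((Function.update z m x (m'+1) - Function.update z m x m') ⬝ᵥ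
              Mf.mulVec (Function.update z m x (m'+1) - Function.update z m x m'))) =
            fun _ => (1/(2*Δt)) * ((z (m'+1) - z m') ⬝ᵥ Mf.mulVec (z (m'+1) - z m')) := by
          funext x
          rw [Function.update_of_ne h2, Function.update_of_ne h1]
        rw [hfun, hDK]
        simp only [if_neg h1, if_neg h2]
        exact hasFDerivAt_const _ _
  have hDKsum : ∑ m' ∈ range p, DK m' = DK (m-1) + DK m := by
    refine sum_support_pair hne2 hmem1 hmem2 ?_
    intro c _ hc1 hc2
    rw [hDK]
    simp only [if_neg hc2, if_neg (by omega : c + 1 ≠ m)]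
  have hkin : HasFDerivAt (fun x : Fin nf → ℝ =>
      Tdisc p Δt Ms Mf a b (Function.update z m x))
      (dpL ((1/Δt) • Mf.mulVec (z m - z (m-1))) + dpL ((1/Δt) • Mf.mulVec (z m - z (m+1)))) (z m) := by
    have hsum := (HasFDerivAt.fun_sum hterm).const_add
      ((1/(2*((p:ℝ)*Δt))) * ((b - a) ⬝ᵥ Ms.mulVec (b - a)))
    rw [hDKsum] at hsum
    have : DK (m-1) + DK m = dpL ((1/Δt) • Mf.mulVec (z m - z (m-1))) +
        dpL ((1/Δt) • Mf.mulVec (z m - z (m+1))) := by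
      rw [hDK]
      simp only [if_neg hne2, if_pos hm1', if_pos rfl, eq_self_iff_true, if_true]
    rw [this] at hsum
    exact hsum
  -- V part
  set DV : ℕ → (Fin nf → ℝ) →L[ℝ] ℝ := fun m' =>
    if m' = m then dpL (((1:ℝ)/2) • gradVf V
        (((1:ℝ)/2) • (slowInterp p a b m + slowInterp p a b (m+1)))
        (((1:ℝ)/2) • (z m + z (m+1))))
    else if m' + 1 = m then dpL (((1:ℝ)/2) • gradVf V
        (((1:ℝ)/2) • (slowInterp p a b (m-1) + slowInterp p a b (m-1+1)))
        (((1:ℝ)/2) • (z (m-1) + z (m-1+1))))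
    else 0 with hDV
  have hVterm : ∀ m' ∈ range p, HasFDerivAt (fun x : Fin nf → ℝ =>
      V (((1:ℝ)/2) • (slowInterp p a b m' + slowInterp p a b (m'+1)))
        (((1:ℝ)/2) • (Function.update z m x m' + Function.update z m x (m'+1)))) (DV m') (z m) := by
    intro m' _
    by_cases h1 : m' = m
    · subst h1
      have hfun : (fun x : Fin nf → ℝ =>
          V (((1:ℝ)/2) • (slowInterp p a b m' + slowInterp p a b (m'+1)))
            (((1:ℝ)/2) • (Function.update z m' x m' + Function.update z m' x (m'+1)))) =
          fun x => V (((1:ℝ)/2) • (slowInterp p a b m' + slowInterp p a b (m'+1)))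
            (((1:ℝ)/2) • x + ((1:ℝ)/2) • z (m'+1)) := by
        funext x
        rw [Function.update_self, Function.update_of_ne (by omega : m' + 1 ≠ m')]
        congr 1
        rw [smul_add]
      rw [hfun, hDV]
      simp only [if_pos rfl]
      have hbase := hasFDerivAt_Vf hV
        (((1:ℝ)/2) • (slowInterp p a b m' + slowInterp p a b (m'+1)))
        (((1:ℝ)/2) • z m' + ((1:ℝ)/2) • z (m'+1))
      have hcomp := HasFDerivAt.comp_affine ((1:ℝ)/2) (((1:ℝ)/2) • z (m'+1)) (z m') hbase
      rwa [← smul_add] at hcomp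
    · by_cases h2 : m' + 1 = m
      · have hfun : (fun x : Fin nf → ℝ =>
            V (((1:ℝ)/2) • (slowInterp p a b m' + slowInterp p a b (m'+1)))
              (((1:ℝ)/2) • (Function.update z m x m' + Function.update z m x (m'+1)))) =
            fun x => V (((1:ℝ)/2) • (slowInterp p a b m' + slowInterp p a b (m'+1)))
              (((1:ℝ)/2) • x + ((1:ℝ)/2) • z m') := by
          funext x
          rw [h2, Function.update_self, Function.update_of_ne (by omega : m' ≠ m)]
          congr 1
          rw [smul_add, add_comm (((1:ℝ)/2) • z m')]
        rw [hfun, hDV]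
        simp only [if_neg h1, if_pos h2]
        have hm' : m' = m - 1 := by omega
        subst hm'
        have hbase := hasFDerivAt_Vf hV
          (((1:ℝ)/2) • (slowInterp p a b (m-1) + slowInterp p a b (m-1+1)))
          (((1:ℝ)/2) • z m + ((1:ℝ)/2) • z (m-1))
        have hcomp := HasFDerivAt.comp_affine ((1:ℝ)/2) (((1:ℝ)/2) • z (m-1)) (z m) hbase
        have heq : ((1:ℝ)/2) • z m + ((1:ℝ)/2) • z (m-1) = ((1:ℝ)/2) • (z (m-1) + z (m-1+1)) := by
          rw [hm1', smul_add]
          abel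
        rwa [heq] at hcomp
      · have hfun : (fun x : Fin nf → ℝ =>
            V (((1:ℝ)/2) • (slowInterp p a b m' + slowInterp p a b (m'+1)))
              (((1:ℝ)/2) • (Function.update z m x m' + Function.update z m x (m'+1)))) =
            fun _ => V (((1:ℝ)/2) • (slowInterp p a b m' + slowInterp p a b (m'+1)))
              (((1:ℝ)/2) • (z m' + z (m'+1))) := by
          funext x
          rw [Function.update_of_ne h1, Function.update_of_ne h2]
        rw [hfun, hDV]
        simp only [if_neg h1, if_neg h2]
        exact hasFDerivAt_const _ _
  have hDVsum : ∑ m' ∈ range p, DV m' = DV (m-1) + DV m := by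
    refine sum_support_pair hne2 hmem1 hmem2 ?_
    intro c _ hc1 hc2
    rw [hDV]
    simp only [if_neg hc2, if_neg (by omega : c + 1 ≠ m)]
  -- W part
  set DW : ℕ → (Fin nf → ℝ) →L[ℝ] ℝ := fun m' =>
    if m' = m then dpL (((1:ℝ)/2) • gradW W (((1:ℝ)/2) • (z m + z (m+1))))
    else if m' + 1 = m then dpL (((1:ℝ)/2) • gradW W (((1:ℝ)/2) • (z (m-1) + z (m-1+1))))
    else 0 with hDW
  have hWterm : ∀ m' ∈ range p, HasFDerivAt (fun x : Fin nf → ℝ =>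
      W (((1:ℝ)/2) • (Function.update z m x m' + Function.update z m x (m'+1)))) (DW m') (z m) := by
    intro m' _
    by_cases h1 : m' = m
    · subst h1
      have hfun : (fun x : Fin nf → ℝ =>
          W (((1:ℝ)/2) • (Function.update z m' x m' + Function.update z m' x (m'+1)))) =
          fun x => W (((1:ℝ)/2) • x + ((1:ℝ)/2) • z (m'+1)) := by
        funext x
        rw [Function.update_self, Function.update_of_ne (by omega : m' + 1 ≠ m'), smul_add]
      rw [hfun, hDW]
      simp only [if_pos rfl]
      have hbase := hasFDerivAt_W hW (((1:ℝ)/2) • z m' + ((1:ℝ)/2) • z (m'+1))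
      have hcomp := HasFDerivAt.comp_affine ((1:ℝ)/2) (((1:ℝ)/2) • z (m'+1)) (z m') hbase
      rwa [← smul_add] at hcomp
    · by_cases h2 : m' + 1 = m
      · have hfun : (fun x : Fin nf → ℝ =>
            W (((1:ℝ)/2) • (Function.update z m x m' + Function.update z m x (m'+1)))) =
            fun x => W (((1:ℝ)/2) • x + ((1:ℝ)/2) • z m') := by
          funext x
          rw [h2, Function.update_self, Function.update_of_ne (by omega : m' ≠ m), smul_add,
            add_comm (((1:ℝ)/2) • z m')]
        rw [hfun, hDW]
        simp only [if_neg h1, if_pos h2]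
        have hm' : m' = m - 1 := by omega
        subst hm'
        have hbase := hasFDerivAt_W hW (((1:ℝ)/2) • z m + ((1:ℝ)/2) • z (m-1))
        have hcomp := HasFDerivAt.comp_affine ((1:ℝ)/2) (((1:ℝ)/2) • z (m-1)) (z m) hbase
        have heq : ((1:ℝ)/2) • z m + ((1:ℝ)/2) • z (m-1) = ((1:ℝ)/2) • (z (m-1) + z (m-1+1)) := by
          rw [hm1', smul_add]
          abel
        rwa [heq] at hcomp
      · have hfun : (fun x : Fin nf → ℝ =>
            W (((1:ℝ)/2) • (Function.update z m x m' + Function.update z m x (m'+1)))) =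
            fun _ => W (((1:ℝ)/2) • (z m' + z (m'+1))) := by
          funext x
          rw [Function.update_of_ne h1, Function.update_of_ne h2]
        rw [hfun, hDW]
        simp only [if_neg h1, if_neg h2]
        exact hasFDerivAt_const _ _
  have hDWsum : ∑ m' ∈ range p, DW m' = DW (m-1) + DW m := by
    refine sum_support_pair hne2 hmem1 hmem2 ?_
    intro c _ hc1 hc2
    rw [hDW]
    simp only [if_neg hc2, if_neg (by omega : c + 1 ≠ m)]
  -- assemble
  have hVsum := (HasFDerivAt.fun_sum hVterm).const_mul Δt
  have hWsum := (HasFDerivAt.fun_sum hWterm).const_mul Δt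
  rw [hDVsum] at hVsum
  rw [hDWsum] at hWsum
  have htotal := (hkin.sub hVsum).sub hWsum
  have hDV' : DV (m-1) + DV m = dpL (((1:ℝ)/2) • gradVf V
        (((1:ℝ)/2) • (slowInterp p a b (m-1) + slowInterp p a b (m-1+1)))
        (((1:ℝ)/2) • (z (m-1) + z (m-1+1)))) +
      dpL (((1:ℝ)/2) • gradVf V
        (((1:ℝ)/2) • (slowInterp p a b m + slowInterp p a b (m+1)))
        (((1:ℝ)/2) • (z m + z (m+1)))) := by
    rw [hDV]
    simp only [if_neg hne2, if_pos hm1', if_pos rfl, eq_self_iff_true, if_true]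
  have hDW' : DW (m-1) + DW m = dpL (((1:ℝ)/2) • gradW W (((1:ℝ)/2) • (z (m-1) + z (m-1+1)))) +
      dpL (((1:ℝ)/2) • gradW W (((1:ℝ)/2) • (z m + z (m+1)))) := by
    rw [hDW]
    simp only [if_neg hne2, if_pos hm1', if_pos rfl, eq_self_iff_true, if_true]
  rw [hDV', hDW'] at htotal
  simp only [dpL_sub, dpL_smul, dpL_add]
  simp only [dpL_smul] at htotal
  exact htotal

lemma hasFDerivAt_Ld_fast_bnd (hp : 1 ≤ p) (hΔt : 0 < Δt) (hMf' : Mfᵀ = Mf)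
    (hV : ContDiff ℝ 1 (fun x : (Fin ns → ℝ) × (Fin nf → ℝ) => V x.1 x.2))
    (hW : ContDiff ℝ 1 W)
    (a b a' b' : Fin ns → ℝ) (z z' : ℕ → Fin nf → ℝ) (hz : z' p = z 0) :
    HasFDerivAt (fun x => LdMidMid p Δt Ms Mf V W a b (Function.update z 0 x) +
        LdMidMid p Δt Ms Mf V W a' b' (Function.update z' p x))
      (dpL (((1/Δt) • Mf.mulVec (z 0 - z (0+1))
          - Δt • (((1:ℝ)/2) • gradVf V
              (((1:ℝ)/2) • (slowInterp p a b 0 + slowInterp p a b (0+1)))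
              (((1:ℝ)/2) • (z 0 + z (0+1))))
          - Δt • (((1:ℝ)/2) • gradW W (((1:ℝ)/2) • (z 0 + z (0+1)))))
        + ((1/Δt) • Mf.mulVec (z' p - z' (p-1))
          - Δt • (((1:ℝ)/2) • gradVf V
              (((1:ℝ)/2) • (slowInterp p a' b' (p-1) + slowInterp p a' b' (p-1+1)))
              (((1:ℝ)/2) • (z' (p-1) + z' (p-1+1))))
          - Δt • (((1:ℝ)/2) • gradW W (((1:ℝ)/2) • (z' (p-1) + z' (p-1+1))))))) (z 0) := by
  have hΔ0 : Δt ≠ 0 := ne_of_gt hΔt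
  have hpp : p - 1 + 1 = p := by omega
  have hmem0 : 0 ∈ range p := by simp only [Finset.mem_range]; omega
  have hmemp : p - 1 ∈ range p := by simp only [Finset.mem_range]; omega
  -- ===== first Lagrangian =====
  have h₁ : HasFDerivAt (fun x => LdMidMid p Δt Ms Mf V W a b (Function.update z 0 x))
      (dpL ((1/Δt) • Mf.mulVec (z 0 - z (0+1)))
        - Δt • dpL (((1:ℝ)/2) • gradVf V
            (((1:ℝ)/2) • (slowInterp p a b 0 + slowInterp p a b (0+1)))
            (((1:ℝ)/2) • (z 0 + z (0+1))))
        - Δt • dpL (((1:ℝ)/2) • gradW W (((1:ℝ)/2) • (z 0 + z (0+1))))) (z 0) := by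
    set DK : ℕ → (Fin nf → ℝ) →L[ℝ] ℝ := fun m' =>
      if m' = 0 then dpL ((1/Δt) • Mf.mulVec (z 0 - z (0+1))) else 0 with hDK
    have hterm : ∀ m' ∈ range p, HasFDerivAt (fun x : Fin nf → ℝ =>
        (1/(2*Δt)) * ((Function.update z 0 x (m'+1) - Function.update z 0 x m') ⬝ᵥ
          Mf.mulVec (Function.update z 0 x (m'+1) - Function.update z 0 x m'))) (DK m') (z 0) := by
      intro m' _
      by_cases h1 : m' = 0
      · subst h1
        have hfun : (fun x : Fin nf → ℝ =>
            (1/(2*Δt)) * ((Function.update z 0 x (0+1) - Function.update z 0 x 0) ⬝ᵥ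
              Mf.mulVec (Function.update z 0 x (0+1) - Function.update z 0 x 0))) =
            fun x => (1/(2*Δt)) * ((z (0+1) - x) ⬝ᵥ Mf.mulVec (z (0+1) - x)) := by
          funext x
          rw [Function.update_self, Function.update_of_ne (by omega : 0 + 1 ≠ 0)]
        rw [hfun, hDK]
        simp only [if_pos rfl, eq_self_iff_true, if_true]
        have h := (hasFDerivAt_quad_shift' Mf hMf' (z (0+1)) (z 0)).const_mul (1/(2*Δt))
        rwa [dpL_half hΔ0] at h
      · have hfun : (fun x : Fin nf → ℝ =>
            (1/(2*Δt)) * ((Function.update z 0 x (m'+1) - Function.update z 0 x m') ⬝ᵥ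
              Mf.mulVec (Function.update z 0 x (m'+1) - Function.update z 0 x m'))) =
            fun _ => (1/(2*Δt)) * ((z (m'+1) - z m') ⬝ᵥ Mf.mulVec (z (m'+1) - z m')) := by
          funext x
          rw [Function.update_of_ne (by omega : m' + 1 ≠ 0), Function.update_of_ne h1]
        rw [hfun, hDK]
        simp only [if_neg h1]
        exact hasFDerivAt_const _ _
    have hDKsum : ∑ m' ∈ range p, DK m' = DK 0 :=
      Finset.sum_eq_single_of_mem 0 hmem0 (fun c _ hc => by rw [hDK]; simp only [if_neg hc])
    set DV : ℕ → (Fin nf → ℝ) →L[ℝ] ℝ := fun m' =>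
      if m' = 0 then dpL (((1:ℝ)/2) • gradVf V
          (((1:ℝ)/2) • (slowInterp p a b 0 + slowInterp p a b (0+1)))
          (((1:ℝ)/2) • (z 0 + z (0+1)))) else 0 with hDV
    have hVterm : ∀ m' ∈ range p, HasFDerivAt (fun x : Fin nf → ℝ =>
        V (((1:ℝ)/2) • (slowInterp p a b m' + slowInterp p a b (m'+1)))
          (((1:ℝ)/2) • (Function.update z 0 x m' + Function.update z 0 x (m'+1)))) (DV m') (z 0) := by
      intro m' _
      by_cases h1 : m' = 0
      · subst h1
        have hfun : (fun x : Fin nf → ℝ =>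
            V (((1:ℝ)/2) • (slowInterp p a b 0 + slowInterp p a b (0+1)))
              (((1:ℝ)/2) • (Function.update z 0 x 0 + Function.update z 0 x (0+1)))) =
            fun x => V (((1:ℝ)/2) • (slowInterp p a b 0 + slowInterp p a b (0+1)))
              (((1:ℝ)/2) • x + ((1:ℝ)/2) • z (0+1)) := by
          funext x
          rw [Function.update_self, Function.update_of_ne (by omega : 0 + 1 ≠ 0)]
          congr 1
          rw [smul_add]
        rw [hfun, hDV]
        simp only [if_pos rfl, eq_self_iff_true, if_true]
        have hbase := hasFDerivAt_Vf hV
          (((1:ℝ)/2) • (slowInterp p a b 0 + slowInterp p a b (0+1)))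
          (((1:ℝ)/2) • z 0 + ((1:ℝ)/2) • z (0+1))
        have hcomp := HasFDerivAt.comp_affine ((1:ℝ)/2) (((1:ℝ)/2) • z (0+1)) (z 0) hbase
        rwa [← smul_add] at hcomp
      · have hfun : (fun x : Fin nf → ℝ =>
            V (((1:ℝ)/2) • (slowInterp p a b m' + slowInterp p a b (m'+1)))
              (((1:ℝ)/2) • (Function.update z 0 x m' + Function.update z 0 x (m'+1)))) =
            fun _ => V (((1:ℝ)/2) • (slowInterp p a b m' + slowInterp p a b (m'+1)))
              (((1:ℝ)/2) • (z m' + z (m'+1))) := by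
          funext x
          rw [Function.update_of_ne h1, Function.update_of_ne (by omega : m' + 1 ≠ 0)]
        rw [hfun, hDV]
        simp only [if_neg h1]
        exact hasFDerivAt_const _ _
    have hDVsum : ∑ m' ∈ range p, DV m' = DV 0 :=
      Finset.sum_eq_single_of_mem 0 hmem0 (fun c _ hc => by rw [hDV]; simp only [if_neg hc])
    set DW : ℕ → (Fin nf → ℝ) →L[ℝ] ℝ := fun m' =>
      if m' = 0 then dpL (((1:ℝ)/2) • gradW W (((1:ℝ)/2) • (z 0 + z (0+1)))) else 0 with hDW
    have hWterm : ∀ m' ∈ range p, HasFDerivAt (fun x : Fin nf → ℝ =>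
        W (((1:ℝ)/2) • (Function.update z 0 x m' + Function.update z 0 x (m'+1)))) (DW m') (z 0) := by
      intro m' _
      by_cases h1 : m' = 0
      · subst h1
        have hfun : (fun x : Fin nf → ℝ =>
            W (((1:ℝ)/2) • (Function.update z 0 x 0 + Function.update z 0 x (0+1)))) =
            fun x => W (((1:ℝ)/2) • x + ((1:ℝ)/2) • z (0+1)) := by
          funext x
          rw [Function.update_self, Function.update_of_ne (by omega : 0 + 1 ≠ 0), smul_add]
        rw [hfun, hDW]
        simp only [if_pos rfl, eq_self_iff_true, if_true]
        have hbase := hasFDerivAt_W hW (((1:ℝ)/2) • z 0 + ((1:ℝ)/2) • z (0+1))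
        have hcomp := HasFDerivAt.comp_affine ((1:ℝ)/2) (((1:ℝ)/2) • z (0+1)) (z 0) hbase
        rwa [← smul_add] at hcomp
      · have hfun : (fun x : Fin nf → ℝ =>
            W (((1:ℝ)/2) • (Function.update z 0 x m' + Function.update z 0 x (m'+1)))) =
            fun _ => W (((1:ℝ)/2) • (z m' + z (m'+1))) := by
          funext x
          rw [Function.update_of_ne h1, Function.update_of_ne (by omega : m' + 1 ≠ 0)]
        rw [hfun, hDW]
        simp only [if_neg h1]
        exact hasFDerivAt_const _ _
    have hDWsum : ∑ m' ∈ range p, DW m' = DW 0 :=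
      Finset.sum_eq_single_of_mem 0 hmem0 (fun c _ hc => by rw [hDW]; simp only [if_neg hc])
    have hDK0 : DK 0 = dpL ((1/Δt) • Mf.mulVec (z 0 - z (0+1))) := by
      rw [hDK]; simp only [if_pos rfl, eq_self_iff_true, if_true]
    have hDV0 : DV 0 = dpL (((1:ℝ)/2) • gradVf V
        (((1:ℝ)/2) • (slowInterp p a b 0 + slowInterp p a b (0+1)))
        (((1:ℝ)/2) • (z 0 + z (0+1)))) := by
      rw [hDV]; simp only [if_pos rfl, eq_self_iff_true, if_true]
    have hDW0 : DW 0 = dpL (((1:ℝ)/2) • gradW W (((1:ℝ)/2) • (z 0 + z (0+1)))) := by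
      rw [hDW]; simp only [if_pos rfl, eq_self_iff_true, if_true]
    have hkin := (HasFDerivAt.fun_sum hterm).const_add
      ((1/(2*((p:ℝ)*Δt))) * ((b - a) ⬝ᵥ Ms.mulVec (b - a)))
    rw [hDKsum, hDK0] at hkin
    have hVsum := (HasFDerivAt.fun_sum hVterm).const_mul Δt
    rw [hDVsum, hDV0] at hVsum
    have hWsum := (HasFDerivAt.fun_sum hWterm).const_mul Δt
    rw [hDWsum, hDW0] at hWsum
    exact (hkin.sub hVsum).sub hWsum
  -- ===== second Lagrangian =====
  have h₂ : HasFDerivAt (fun x => LdMidMid p Δt Ms Mf V W a' b' (Function.update z' p x))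
      (dpL ((1/Δt) • Mf.mulVec (z' p - z' (p-1)))
        - Δt • dpL (((1:ℝ)/2) • gradVf V
            (((1:ℝ)/2) • (slowInterp p a' b' (p-1) + slowInterp p a' b' (p-1+1)))
            (((1:ℝ)/2) • (z' (p-1) + z' (p-1+1))))
        - Δt • dpL (((1:ℝ)/2) • gradW W (((1:ℝ)/2) • (z' (p-1) + z' (p-1+1))))) (z 0) := by
    set DK : ℕ → (Fin nf → ℝ) →L[ℝ] ℝ := fun m' =>
      if m' + 1 = p then dpL ((1/Δt) • Mf.mulVec (z' p - z' (p-1))) else 0 with hDK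
    have hterm : ∀ m' ∈ range p, HasFDerivAt (fun x : Fin nf → ℝ =>
        (1/(2*Δt)) * ((Function.update z' p x (m'+1) - Function.update z' p x m') ⬝ᵥ
          Mf.mulVec (Function.update z' p x (m'+1) - Function.update z' p x m'))) (DK m') (z 0) := by
      intro m' hm'
      rw [Finset.mem_range] at hm'
      by_cases h1 : m' + 1 = p
      · have hfun : (fun x : Fin nf → ℝ =>
            (1/(2*Δt)) * ((Function.update z' p x (m'+1) - Function.update z' p x m') ⬝ᵥ
              Mf.mulVec (Function.update z' p x (m'+1) - Function.update z' p x m'))) =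
            fun x => (1/(2*Δt)) * ((x - z' m') ⬝ᵥ Mf.mulVec (x - z' m')) := by
          funext x
          rw [h1, Function.update_self, Function.update_of_ne (by omega : m' ≠ p)]
        rw [hfun, hDK]
        simp only [if_pos h1]
        have h := (hasFDerivAt_quad_shift Mf hMf' (z' m') (z 0)).const_mul (1/(2*Δt))
        rw [dpL_half hΔ0] at h
        have hm'' : m' = p - 1 := by omega
        subst hm''
        rwa [show z 0 - z' (p-1) = z' p - z' (p-1) by rw [hz]] at h
      · have hfun : (fun x : Fin nf → ℝ =>
            (1/(2*Δt)) * ((Function.update z' p x (m'+1) - Function.update z' p x m') ⬝ᵥ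
              Mf.mulVec (Function.update z' p x (m'+1) - Function.update z' p x m'))) =
            fun _ => (1/(2*Δt)) * ((z' (m'+1) - z' m') ⬝ᵥ Mf.mulVec (z' (m'+1) - z' m')) := by
          funext x
          rw [Function.update_of_ne h1, Function.update_of_ne (by omega : m' ≠ p)]
        rw [hfun, hDK]
        simp only [if_neg h1]
        exact hasFDerivAt_const _ _
    have hDKsum : ∑ m' ∈ range p, DK m' = DK (p-1) := by
      refine Finset.sum_eq_single_of_mem (p-1) hmemp (fun c hc hcp => ?_)
      rw [Finset.mem_range] at hc
      rw [hDK]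
      simp only [if_neg (by omega : ¬ c + 1 = p)]
    set DV : ℕ → (Fin nf → ℝ) →L[ℝ] ℝ := fun m' =>
      if m' + 1 = p then dpL (((1:ℝ)/2) • gradVf V
          (((1:ℝ)/2) • (slowInterp p a' b' (p-1) + slowInterp p a' b' (p-1+1)))
          (((1:ℝ)/2) • (z' (p-1) + z' (p-1+1)))) else 0 with hDV
    have hVterm : ∀ m' ∈ range p, HasFDerivAt (fun x : Fin nf → ℝ =>
        V (((1:ℝ)/2) • (slowInterp p a' b' m' + slowInterp p a' b' (m'+1)))
          (((1:ℝ)/2) • (Function.update z' p x m' + Function.update z' p x (m'+1)))) (DV m') (z 0) := by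
      intro m' hm'
      rw [Finset.mem_range] at hm'
      by_cases h1 : m' + 1 = p
      · have hfun : (fun x : Fin nf → ℝ =>
            V (((1:ℝ)/2) • (slowInterp p a' b' m' + slowInterp p a' b' (m'+1)))
              (((1:ℝ)/2) • (Function.update z' p x m' + Function.update z' p x (m'+1)))) =
            fun x => V (((1:ℝ)/2) • (slowInterp p a' b' m' + slowInterp p a' b' (m'+1)))
              (((1:ℝ)/2) • x + ((1:ℝ)/2) • z' m') := by
          funext x
          rw [h1, Function.update_self, Function.update_of_ne (by omega : m' ≠ p)]
          congr 1
          rw [smul_add, add_comm (((1:ℝ)/2) • z' m')]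
        rw [hfun, hDV]
        simp only [if_pos h1]
        have hm'' : m' = p - 1 := by omega
        subst hm''
        have hbase := hasFDerivAt_Vf hV
          (((1:ℝ)/2) • (slowInterp p a' b' (p-1) + slowInterp p a' b' (p-1+1)))
          (((1:ℝ)/2) • z 0 + ((1:ℝ)/2) • z' (p-1))
        have hcomp := HasFDerivAt.comp_affine ((1:ℝ)/2) (((1:ℝ)/2) • z' (p-1)) (z 0) hbase
        have heq : ((1:ℝ)/2) • z 0 + ((1:ℝ)/2) • z' (p-1) =
            ((1:ℝ)/2) • (z' (p-1) + z' (p-1+1)) := by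
          rw [hpp, hz, smul_add]
          abel
        rwa [heq] at hcomp
      · have hfun : (fun x : Fin nf → ℝ =>
            V (((1:ℝ)/2) • (slowInterp p a' b' m' + slowInterp p a' b' (m'+1)))
              (((1:ℝ)/2) • (Function.update z' p x m' + Function.update z' p x (m'+1)))) =
            fun _ => V (((1:ℝ)/2) • (slowInterp p a' b' m' + slowInterp p a' b' (m'+1)))
              (((1:ℝ)/2) • (z' m' + z' (m'+1))) := by
          funext x
          rw [Function.update_of_ne (by omega : m' ≠ p), Function.update_of_ne h1]
        rw [hfun, hDV]
        simp only [if_neg h1]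
        exact hasFDerivAt_const _ _
    have hDVsum : ∑ m' ∈ range p, DV m' = DV (p-1) := by
      refine Finset.sum_eq_single_of_mem (p-1) hmemp (fun c hc hcp => ?_)
      rw [Finset.mem_range] at hc
      rw [hDV]
      simp only [if_neg (by omega : ¬ c + 1 = p)]
    set DW : ℕ → (Fin nf → ℝ) →L[ℝ] ℝ := fun m' =>
      if m' + 1 = p then dpL (((1:ℝ)/2) • gradW W (((1:ℝ)/2) • (z' (p-1) + z' (p-1+1)))) else 0 with hDW
    have hWterm : ∀ m' ∈ range p, HasFDerivAt (fun x : Fin nf → ℝ =>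
        W (((1:ℝ)/2) • (Function.update z' p x m' + Function.update z' p x (m'+1)))) (DW m') (z 0) := by
      intro m' hm'
      rw [Finset.mem_range] at hm'
      by_cases h1 : m' + 1 = p
      · have hfun : (fun x : Fin nf → ℝ =>
            W (((1:ℝ)/2) • (Function.update z' p x m' + Function.update z' p x (m'+1)))) =
            fun x => W (((1:ℝ)/2) • x + ((1:ℝ)/2) • z' m') := by
          funext x
          rw [h1, Function.update_self, Function.update_of_ne (by omega : m' ≠ p)]
          congr 1
          rw [smul_add, add_comm (((1:ℝ)/2) • z' m')]
        rw [hfun, hDW]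
        simp only [if_pos h1]
        have hm'' : m' = p - 1 := by omega
        subst hm''
        have hbase := hasFDerivAt_W hW (((1:ℝ)/2) • z 0 + ((1:ℝ)/2) • z' (p-1))
        have hcomp := HasFDerivAt.comp_affine ((1:ℝ)/2) (((1:ℝ)/2) • z' (p-1)) (z 0) hbase
        have heq : ((1:ℝ)/2) • z 0 + ((1:ℝ)/2) • z' (p-1) =
            ((1:ℝ)/2) • (z' (p-1) + z' (p-1+1)) := by
          rw [hpp, hz, smul_add]
          abel
        rwa [heq] at hcomp
      · have hfun : (fun x : Fin nf → ℝ =>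
            W (((1:ℝ)/2) • (Function.update z' p x m' + Function.update z' p x (m'+1)))) =
            fun _ => W (((1:ℝ)/2) • (z' m' + z' (m'+1))) := by
          funext x
          rw [Function.update_of_ne (by omega : m' ≠ p), Function.update_of_ne h1]
        rw [hfun, hDW]
        simp only [if_neg h1]
        exact hasFDerivAt_const _ _
    have hDWsum : ∑ m' ∈ range p, DW m' = DW (p-1) := by
      refine Finset.sum_eq_single_of_mem (p-1) hmemp (fun c hc hcp => ?_)
      rw [Finset.mem_range] at hc
      rw [hDW]
      simp only [if_neg (by omega : ¬ c + 1 = p)]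
    have hDKp : DK (p-1) = dpL ((1/Δt) • Mf.mulVec (z' p - z' (p-1))) := by
      rw [hDK]; simp only [if_pos hpp]
    have hDVp : DV (p-1) = dpL (((1:ℝ)/2) • gradVf V
        (((1:ℝ)/2) • (slowInterp p a' b' (p-1) + slowInterp p a' b' (p-1+1)))
        (((1:ℝ)/2) • (z' (p-1) + z' (p-1+1)))) := by
      rw [hDV]; simp only [if_pos hpp]
    have hDWp : DW (p-1) = dpL (((1:ℝ)/2) • gradW W (((1:ℝ)/2) • (z' (p-1) + z' (p-1+1)))) := by
      rw [hDW]; simp only [if_pos hpp]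
    have hkin := (HasFDerivAt.fun_sum hterm).const_add
      ((1/(2*((p:ℝ)*Δt))) * ((b' - a') ⬝ᵥ Ms.mulVec (b' - a')))
    rw [hDKsum, hDKp] at hkin
    have hVsum := (HasFDerivAt.fun_sum hVterm).const_mul Δt
    rw [hDVsum, hDVp] at hVsum
    have hWsum := (HasFDerivAt.fun_sum hWterm).const_mul Δt
    rw [hDWsum, hDWp] at hWsum
    exact (hkin.sub hVsum).sub hWsum
  have htot := h₁.add h₂
  simp only [dpL_smul] at htot
  simp only [dpL_add, dpL_sub, dpL_smul]
  exact htot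

end main


lemma sum_comb1 {n : ℕ} (p : ℕ) (hp : 1 ≤ p) (g : ℕ → Fin n → ℝ) :
    ∑ m ∈ range p, (1 - (2*(m:ℝ)+1)/(2*(p:ℝ))) • g m -
      ∑ m ∈ range p, ((2*(m:ℝ)+1)/(2*(p:ℝ))) • g m =
      ∑ m ∈ range p, (1 - (2*(m:ℝ)+1)/(p:ℝ)) • g m := by
  rw [← Finset.sum_sub_distrib]
  refine Finset.sum_congr rfl fun m _ => ?_
  rw [← sub_smul]
  congr 1
  have hp0 : (p:ℝ) ≠ 0 := Nat.cast_ne_zero.mpr (by omega)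
  field_simp
  ring

lemma sum_comb2 {n : ℕ} (p : ℕ) (g : ℕ → Fin n → ℝ) :
    ∑ m ∈ range p, (1 - (2*(m:ℝ)+1)/(2*(p:ℝ))) • g m +
      ∑ m ∈ range p, ((2*(m:ℝ)+1)/(2*(p:ℝ))) • g m = ∑ m ∈ range p, g m := by
  rw [← Finset.sum_add_distrib]
  refine Finset.sum_congr rfl fun m _ => ?_
  rw [← add_smul, show (1 - (2*(m:ℝ)+1)/(2*(p:ℝ))) + ((2*(m:ℝ)+1)/(2*(p:ℝ))) = 1 by ring,
    one_smul]


/-- **Midpoint fast, midpoint slow scheme.** A discrete trajectory satisfies the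
discrete multirate Euler–Lagrange equations for the midpoint–midpoint discrete
Lagrangian iff there exist momenta satisfying the `(p,q)`-scheme
(i)–(iv) of Theorem 3. -/
theorem midpoint_midpoint_scheme
    (ns nf p N : ℕ) (hns : 1 ≤ ns) (hnf : 1 ≤ nf) (hp : 1 ≤ p) (hN : 2 ≤ N)
    (Δt : ℝ) (hΔt : 0 < Δt)
    (Ms : Matrix (Fin ns) (Fin ns) ℝ) (Mf : Matrix (Fin nf) (Fin nf) ℝ)
    (hMs : Ms.PosDef) (hMf : Mf.PosDef)
    (V : (Fin ns → ℝ) → (Fin nf → ℝ) → ℝ) (W : (Fin nf → ℝ) → ℝ)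
    (hV : ContDiff ℝ 1 (fun x : (Fin ns → ℝ) × (Fin nf → ℝ) => V x.1 x.2))
    (hW : ContDiff ℝ 1 W)
    (qs : ℕ → Fin ns → ℝ) (qf : ℕ → ℕ → Fin nf → ℝ)
    (hid : ∀ k, qf k p = qf (k + 1) 0) :
    -- midpoint abbreviations
    (let Ld := fun (a b : Fin ns → ℝ) (z : ℕ → Fin nf → ℝ) =>
        LdMidMid p Δt Ms Mf V W a b z
     let midS := fun k m =>
        ((1 : ℝ) / 2) • (slowInterp p (qs k) (qs (k + 1)) m +
          slowInterp p (qs k) (qs (k + 1)) (m + 1))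
     let midF := fun k m => ((1 : ℝ) / 2) • (qf k m + qf k (m + 1))
     -- discrete multirate Euler–Lagrange equations
     ((∀ k, 1 ≤ k → k ≤ N - 1 →
         fderiv ℝ (fun x => Ld x (qs (k + 1)) (qf k) + Ld (qs (k - 1)) x (qf (k - 1)))
           (qs k) = 0) ∧
       (∀ k, 1 ≤ k → k ≤ N - 1 →
         fderiv ℝ (fun x =>
             Ld (qs k) (qs (k + 1)) (Function.update (qf k) 0 x) +
               Ld (qs (k - 1)) (qs k) (Function.update (qf (k - 1)) p x))
           (qf k 0) = 0) ∧
       (∀ k, k ≤ N - 1 → ∀ m, 1 ≤ m → m ≤ p - 1 →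
         fderiv ℝ (fun x => Ld (qs k) (qs (k + 1)) (Function.update (qf k) m x))
           (qf k m) = 0))
     ↔
     -- the `(p,q)`-scheme
     (∃ (ps : ℕ → Fin ns → ℝ) (pf : ℕ → ℕ → Fin nf → ℝ),
       (∀ k, k + 1 ≤ N - 1 → pf k p = pf (k + 1) 0) ∧
       (∀ k, k ≤ N - 1 →
         qs (k + 1) = qs k + (((p : ℝ) * Δt) / 2) •
           Matrix.mulVec Ms⁻¹
             (ps k + ps (k + 1) -
               Δt • ∑ m ∈ range p,
                 (1 - (2 * (m : ℝ) + 1) / (p : ℝ)) • gradVs V (midS k m) (midF k m))) ∧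
       (∀ k, k ≤ N - 1 →
         ps (k + 1) = ps k - Δt • ∑ m ∈ range p, gradVs V (midS k m) (midF k m)) ∧
       (∀ k, k ≤ N - 1 → ∀ m, m ≤ p - 1 →
         qf k (m + 1) = qf k m +
           Δt • Matrix.mulVec Mf⁻¹ (((1 : ℝ) / 2) • (pf k m + pf k (m + 1)))) ∧
       (∀ k, k ≤ N - 1 → ∀ m, m ≤ p - 1 →
         pf k (m + 1) = pf k m - Δt • gradVf V (midS k m) (midF k m) -
           Δt • gradW W (midF k m)))) := by
  have hMs' : Ms.transpose = Ms := by
    have h := hMs.1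
    rw [Matrix.IsHermitian, Matrix.conjTranspose_eq_transpose_of_trivial] at h
    exact h
  have hMf' : Mf.transpose = Mf := by
    have h := hMf.1
    rw [Matrix.IsHermitian, Matrix.conjTranspose_eq_transpose_of_trivial] at h
    exact h
  have hdetMs : IsUnit Ms.det := isUnit_iff_ne_zero.mpr (ne_of_gt hMs.det_pos)
  have hdetMf : IsUnit Mf.det := isUnit_iff_ne_zero.mpr (ne_of_gt hMf.det_pos)
  have hp0 : (p:ℝ) ≠ 0 := Nat.cast_ne_zero.mpr (by omega)
  have hΔ0 : Δt ≠ 0 := ne_of_gt hΔt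
  have hpΔ0 : (p:ℝ) * Δt ≠ 0 := mul_ne_zero hp0 hΔ0
  have hpp : p - 1 + 1 = p := by omega
  dsimp only
  set A : ℕ → Fin ns → ℝ := fun k =>
    (1/((p:ℝ)*Δt)) • Ms.mulVec (qs (k+1) - qs k) +
      Δt • ∑ m ∈ range p, (1 - (2*(m:ℝ)+1)/(2*(p:ℝ))) •
        gradVs V (((1:ℝ)/2) • (slowInterp p (qs k) (qs (k+1)) m +
            slowInterp p (qs k) (qs (k+1)) (m+1)))
          (((1:ℝ)/2) • (qf k m + qf k (m+1))) with hA
  set B : ℕ → Fin ns → ℝ := fun k =>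
    (1/((p:ℝ)*Δt)) • Ms.mulVec (qs (k+1) - qs k) -
      Δt • ∑ m ∈ range p, ((2*(m:ℝ)+1)/(2*(p:ℝ))) •
        gradVs V (((1:ℝ)/2) • (slowInterp p (qs k) (qs (k+1)) m +
            slowInterp p (qs k) (qs (k+1)) (m+1)))
          (((1:ℝ)/2) • (qf k m + qf k (m+1))) with hB
  set E : ℕ → ℕ → Fin nf → ℝ := fun k m =>
    (1/Δt) • Mf.mulVec (qf k (m+1) - qf k m) +
      (Δt/2) • (gradVf V (((1:ℝ)/2) • (slowInterp p (qs k) (qs (k+1)) m +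
            slowInterp p (qs k) (qs (k+1)) (m+1)))
          (((1:ℝ)/2) • (qf k m + qf k (m+1))) +
        gradW W (((1:ℝ)/2) • (qf k m + qf k (m+1)))) with hE
  set F : ℕ → ℕ → Fin nf → ℝ := fun k m =>
    (1/Δt) • Mf.mulVec (qf k (m+1) - qf k m) -
      (Δt/2) • (gradVf V (((1:ℝ)/2) • (slowInterp p (qs k) (qs (k+1)) m +
            slowInterp p (qs k) (qs (k+1)) (m+1)))
          (((1:ℝ)/2) • (qf k m + qf k (m+1))) +
        gradW W (((1:ℝ)/2) • (qf k m + qf k (m+1)))) with hF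
  -- characterization of the slow DEL
  have hDEL1 : ∀ k, 1 ≤ k →
      ((fderiv ℝ (fun x => LdMidMid p Δt Ms Mf V W x (qs (k+1)) (qf k) +
          LdMidMid p Δt Ms Mf V W (qs (k-1)) x (qf (k-1))) (qs k) = 0) ↔ A k = B (k-1)) := by
    intro k hk
    have h1 := hasFDerivAt_Ld_slot1 (Ms := Ms) (Mf := Mf) (W := W)
      hp hΔt hMs' hV (qs k) (qs (k+1)) (qf k)
    have h2 := hasFDerivAt_Ld_slot2 (Ms := Ms) (Mf := Mf) (W := W)
      hp hΔt hMs' hV (qs (k-1)) (qs k) (qf (k-1))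
    have hw : ((1/((p:ℝ)*Δt)) • Ms.mulVec (qs k - qs (k+1)) -
        Δt • ∑ m ∈ range p, (1 - (2*(m:ℝ)+1)/(2*(p:ℝ))) •
          gradVs V (((1:ℝ)/2) • (slowInterp p (qs k) (qs (k+1)) m +
              slowInterp p (qs k) (qs (k+1)) (m+1)))
            (((1:ℝ)/2) • (qf k m + qf k (m+1)))) +
        ((1/((p:ℝ)*Δt)) • Ms.mulVec (qs k - qs (k-1)) -
        Δt • ∑ m ∈ range p, ((2*(m:ℝ)+1)/(2*(p:ℝ))) •
          gradVs V (((1:ℝ)/2) • (slowInterp p (qs (k-1)) (qs k) m +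
              slowInterp p (qs (k-1)) (qs k) (m+1)))
            (((1:ℝ)/2) • (qf (k-1) m + qf (k-1) (m+1)))) = B (k-1) - A k := by
      simp only [hA, hB, Matrix.mulVec_sub]
      rw [show k - 1 + 1 = k by omega]
      match_scalars <;> ring
    rw [(h1.fun_add h2).fderiv, ← dpL_add, dpL_eq_zero_iff, hw, sub_eq_zero]
    exact eq_comm
  -- characterization of the fast boundary DEL
  have hDEL2 : ∀ k, 1 ≤ k →
      ((fderiv ℝ (fun x => LdMidMid p Δt Ms Mf V W (qs k) (qs (k+1)) (Function.update (qf k) 0 x) +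
          LdMidMid p Δt Ms Mf V W (qs (k-1)) (qs k) (Function.update (qf (k-1)) p x)) (qf k 0) = 0)
        ↔ E k 0 = F (k-1) (p-1)) := by
    intro k hk
    have hz : qf (k-1) p = qf k 0 := by
      have := hid (k-1)
      rwa [show k - 1 + 1 = k by omega] at this
    have h1 := hasFDerivAt_Ld_fast_bnd (Ms := Ms) hp hΔt hMf' hV hW
      (qs k) (qs (k+1)) (qs (k-1)) (qs k) (qf k) (qf (k-1)) hz
    have hw : (((1/Δt) • Mf.mulVec (qf k 0 - qf k (0+1))
          - Δt • (((1:ℝ)/2) • gradVf V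
              (((1:ℝ)/2) • (slowInterp p (qs k) (qs (k+1)) 0 + slowInterp p (qs k) (qs (k+1)) (0+1)))
              (((1:ℝ)/2) • (qf k 0 + qf k (0+1))))
          - Δt • (((1:ℝ)/2) • gradW W (((1:ℝ)/2) • (qf k 0 + qf k (0+1)))))
        + ((1/Δt) • Mf.mulVec (qf (k-1) p - qf (k-1) (p-1))
          - Δt • (((1:ℝ)/2) • gradVf V
              (((1:ℝ)/2) • (slowInterp p (qs (k-1)) (qs k) (p-1) + slowInterp p (qs (k-1)) (qs k) (p-1+1)))
              (((1:ℝ)/2) • (qf (k-1) (p-1) + qf (k-1) (p-1+1))))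
          - Δt • (((1:ℝ)/2) • gradW W (((1:ℝ)/2) • (qf (k-1) (p-1) + qf (k-1) (p-1+1)))))) =
        F (k-1) (p-1) - E k 0 := by
      simp only [hE, hF, Matrix.mulVec_sub]
      rw [show k - 1 + 1 = k by omega, hpp]
      match_scalars <;> ring
    rw [h1.fderiv, dpL_eq_zero_iff, hw, sub_eq_zero]
    exact eq_comm
  -- characterization of the fast interior DEL
  have hDEL3 : ∀ k m, 1 ≤ m → m < p →
      ((fderiv ℝ (fun x => LdMidMid p Δt Ms Mf V W (qs k) (qs (k+1)) (Function.update (qf k) m x))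
          (qf k m) = 0) ↔ E k m = F k (m-1)) := by
    intro k m hm1 hmp
    have h1 := hasFDerivAt_Ld_fast_int (Ms := Ms) hp hΔt hMf' hV hW
      (qs k) (qs (k+1)) (qf k) m hm1 hmp
    have hw : (((1/Δt) • Mf.mulVec (qf k m - qf k (m-1)) + (1/Δt) • Mf.mulVec (qf k m - qf k (m+1)))
        - Δt • (((1:ℝ)/2) • gradVf V
              (((1:ℝ)/2) • (slowInterp p (qs k) (qs (k+1)) (m-1) + slowInterp p (qs k) (qs (k+1)) (m-1+1)))
              (((1:ℝ)/2) • (qf k (m-1) + qf k (m-1+1))) +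
            ((1:ℝ)/2) • gradVf V
              (((1:ℝ)/2) • (slowInterp p (qs k) (qs (k+1)) m + slowInterp p (qs k) (qs (k+1)) (m+1)))
              (((1:ℝ)/2) • (qf k m + qf k (m+1))))
        - Δt • (((1:ℝ)/2) • gradW W (((1:ℝ)/2) • (qf k (m-1) + qf k (m-1+1))) +
            ((1:ℝ)/2) • gradW W (((1:ℝ)/2) • (qf k m + qf k (m+1))))) = F k (m-1) - E k m := by
      simp only [hE, hF, Matrix.mulVec_sub]
      rw [show m - 1 + 1 = m by omega]
      match_scalars <;> ring
    rw [h1.fderiv, dpL_eq_zero_iff, hw, sub_eq_zero]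
    exact eq_comm
  -- algebraic facts
  have f1 : ∀ k, A k + B k - Δt • ∑ m ∈ range p, (1 - (2*(m:ℝ)+1)/(p:ℝ)) •
      gradVs V (((1:ℝ)/2) • (slowInterp p (qs k) (qs (k+1)) m + slowInterp p (qs k) (qs (k+1)) (m+1)))
        (((1:ℝ)/2) • (qf k m + qf k (m+1))) =
      (2/((p:ℝ)*Δt)) • Ms.mulVec (qs (k+1) - qs k) := by
    intro k
    rw [← sum_comb1 p hp (fun m => gradVs V
      (((1:ℝ)/2) • (slowInterp p (qs k) (qs (k+1)) m + slowInterp p (qs k) (qs (k+1)) (m+1)))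
      (((1:ℝ)/2) • (qf k m + qf k (m+1))))]
    simp only [hA, hB, Matrix.mulVec_sub]
    match_scalars <;> ring
  have f2 : ∀ k, B k = A k - Δt • ∑ m ∈ range p,
      gradVs V (((1:ℝ)/2) • (slowInterp p (qs k) (qs (k+1)) m + slowInterp p (qs k) (qs (k+1)) (m+1)))
        (((1:ℝ)/2) • (qf k m + qf k (m+1))) := by
    intro k
    rw [← sum_comb2 p (fun m => gradVs V
      (((1:ℝ)/2) • (slowInterp p (qs k) (qs (k+1)) m + slowInterp p (qs k) (qs (k+1)) (m+1)))
      (((1:ℝ)/2) • (qf k m + qf k (m+1))))]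
    simp only [hA, hB]
    match_scalars <;> ring
  have f4 : ∀ k m, F k m = E k m - Δt •
      gradVf V (((1:ℝ)/2) • (slowInterp p (qs k) (qs (k+1)) m + slowInterp p (qs k) (qs (k+1)) (m+1)))
        (((1:ℝ)/2) • (qf k m + qf k (m+1))) -
      Δt • gradW W (((1:ℝ)/2) • (qf k m + qf k (m+1))) := by
    intro k m
    simp only [hE, hF]
    match_scalars <;> ring
  have f6 : ∀ k m, ((1:ℝ)/2) • (E k m + F k m) = (1/Δt) • Mf.mulVec (qf k (m+1) - qf k m) := by
    intro k m
    simp only [hE, hF]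
    match_scalars <;> ring
  have f3 : ∀ k m, qf k m + Δt • Mf⁻¹ *ᵥ (((1:ℝ)/2) • (E k m + F k m)) = qf k (m+1) := by
    intro k m
    rw [f6 k m, Matrix.mulVec_smul, Matrix.mulVec_mulVec, Matrix.nonsing_inv_mul Mf hdetMf,
      Matrix.one_mulVec, smul_smul, show Δt * (1/Δt) = 1 by field_simp, one_smul]
    abel
  have f5 : ∀ k, qs k + (((p:ℝ)*Δt)/2) • Ms⁻¹ *ᵥ ((2/((p:ℝ)*Δt)) • Ms.mulVec (qs (k+1) - qs k)) =
      qs (k+1) := by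
    intro k
    rw [Matrix.mulVec_smul, Matrix.mulVec_mulVec, Matrix.nonsing_inv_mul Ms hdetMs,
      Matrix.one_mulVec, smul_smul, show ((p:ℝ)*Δt)/2 * (2/((p:ℝ)*Δt)) = 1 by field_simp,
      one_smul]
    abel
  constructor
  · -- DEL implies scheme
    rintro ⟨d1, d2, d3⟩
    have can1 : ∀ k, 1 ≤ k → k ≤ N - 1 → A k = B (k-1) :=
      fun k h1 h2 => (hDEL1 k h1).mp (d1 k h1 h2)
    have can2 : ∀ k, 1 ≤ k → k ≤ N - 1 → E k 0 = F (k-1) (p-1) :=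
      fun k h1 h2 => (hDEL2 k h1).mp (d2 k h1 h2)
    have can3 : ∀ k, k ≤ N - 1 → ∀ m, 1 ≤ m → m < p → E k m = F k (m-1) :=
      fun k hk m h1 h2 => (hDEL3 k m h1 h2).mp (d3 k hk m h1 (by omega))
    refine ⟨fun k => if k < N then A k else B (N-1),
      fun k m => if m < p then E k m else F k (p-1), ?_, ?_, ?_, ?_, ?_⟩
    · intro k hk
      dsimp only
      rw [if_neg (lt_irrefl p), if_pos (by omega : 0 < p)]
      have h := can2 (k+1) (by omega) (by omega)
      rw [Nat.add_sub_cancel] at h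
      exact h.symm
    · intro k hk
      dsimp only
      rw [if_pos (by omega : k < N)]
      have hpsk1 : (if k + 1 < N then A (k+1) else B (N-1)) = B k := by
        by_cases h : k + 1 < N
        · rw [if_pos h]
          have := can1 (k+1) (by omega) (by omega)
          rwa [Nat.add_sub_cancel] at this
        · rw [if_neg h, show N - 1 = k by omega]
      rw [hpsk1, f1 k, f5 k]
    · intro k hk
      dsimp only
      rw [if_pos (by omega : k < N)]
      have hpsk1 : (if k + 1 < N then A (k+1) else B (N-1)) = B k := by
        by_cases h : k + 1 < N
        · rw [if_pos h]
          have := can1 (k+1) (by omega) (by omega)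
          rwa [Nat.add_sub_cancel] at this
        · rw [if_neg h, show N - 1 = k by omega]
      rw [hpsk1]
      exact f2 k
    · intro k hk m hm
      dsimp only
      rw [if_pos (by omega : m < p)]
      have e2 : (if m + 1 < p then E k (m+1) else F k (p-1)) = F k m := by
        by_cases h : m + 1 < p
        · rw [if_pos h]
          have := can3 k hk (m+1) (by omega) h
          rwa [Nat.add_sub_cancel] at this
        · rw [if_neg h, show p - 1 = m by omega]
      rw [e2, f3 k m]
    · intro k hk m hm
      dsimp only
      rw [if_pos (by omega : m < p)]
      have e2 : (if m + 1 < p then E k (m+1) else F k (p-1)) = F k m := by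
        by_cases h : m + 1 < p
        · rw [if_pos h]
          have := can3 k hk (m+1) (by omega) h
          rwa [Nat.add_sub_cancel] at this
        · rw [if_neg h, show p - 1 = m by omega]
      rw [e2]
      exact f4 k m
  · -- scheme implies DEL
    rintro ⟨ps, pf, hc, h1, h2, h3, h4⟩
    have hPS : ∀ k, k ≤ N - 1 → ps k = A k ∧ ps (k+1) = B k := by
      intro k hk
      have hXeq : ps k + ps (k+1) - Δt • ∑ m ∈ range p, (1 - (2*(m:ℝ)+1)/(p:ℝ)) •
          gradVs V (((1:ℝ)/2) • (slowInterp p (qs k) (qs (k+1)) m + slowInterp p (qs k) (qs (k+1)) (m+1)))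
            (((1:ℝ)/2) • (qf k m + qf k (m+1))) =
          (2/((p:ℝ)*Δt)) • Ms.mulVec (qs (k+1) - qs k) := by
        have h := h1 k hk
        have h2' := congrArg (fun v => Ms.mulVec v) h
        simp only [Matrix.mulVec_add, Matrix.mulVec_smul, Matrix.mulVec_mulVec,
          Matrix.mul_nonsing_inv Ms hdetMs, Matrix.one_mulVec] at h2'
        have h3' : (((p:ℝ)*Δt)/2) • (ps k + ps (k+1) - Δt • ∑ m ∈ range p, (1 - (2*(m:ℝ)+1)/(p:ℝ)) •
            gradVs V (((1:ℝ)/2) • (slowInterp p (qs k) (qs (k+1)) m + slowInterp p (qs k) (qs (k+1)) (m+1)))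
              (((1:ℝ)/2) • (qf k m + qf k (m+1)))) =
            Ms.mulVec (qs (k+1)) - Ms.mulVec (qs k) := by
          rw [h2']; abel
        have h4' := congrArg (fun v => (2/((p:ℝ)*Δt)) • v) h3'
        simp only [smul_smul] at h4'
        rw [show (2/((p:ℝ)*Δt)) * (((p:ℝ)*Δt)/2) = 1 by field_simp, one_smul] at h4'
        rw [h4', Matrix.mulVec_sub]
      have hsum : ps k + ps (k+1) = A k + B k := by
        have hf := f1 k
        have h5 : ps k + ps (k+1) - Δt • ∑ m ∈ range p, (1 - (2*(m:ℝ)+1)/(p:ℝ)) •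
            gradVs V (((1:ℝ)/2) • (slowInterp p (qs k) (qs (k+1)) m + slowInterp p (qs k) (qs (k+1)) (m+1)))
              (((1:ℝ)/2) • (qf k m + qf k (m+1))) =
            A k + B k - Δt • ∑ m ∈ range p, (1 - (2*(m:ℝ)+1)/(p:ℝ)) •
            gradVs V (((1:ℝ)/2) • (slowInterp p (qs k) (qs (k+1)) m + slowInterp p (qs k) (qs (k+1)) (m+1)))
              (((1:ℝ)/2) • (qf k m + qf k (m+1))) := hXeq.trans hf.symm
        rwa [sub_left_inj] at h5
      have hdiff : ps (k+1) = ps k - Δt • ∑ m ∈ range p,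
          gradVs V (((1:ℝ)/2) • (slowInterp p (qs k) (qs (k+1)) m + slowInterp p (qs k) (qs (k+1)) (m+1)))
            (((1:ℝ)/2) • (qf k m + qf k (m+1))) := h2 k hk
      have hABd : A k - B k = Δt • ∑ m ∈ range p,
          gradVs V (((1:ℝ)/2) • (slowInterp p (qs k) (qs (k+1)) m + slowInterp p (qs k) (qs (k+1)) (m+1)))
            (((1:ℝ)/2) • (qf k m + qf k (m+1))) := by
        rw [f2 k]; abel
      have hdiff' : ps k - ps (k+1) = A k - B k := by
        rw [hdiff, hABd]; abel
      constructor
      · refine smul_right_injective (Fin ns → ℝ) (by norm_num : (2:ℝ) ≠ 0) ?_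
        calc (2:ℝ) • ps k = (ps k + ps (k+1)) + (ps k - ps (k+1)) := by module
        _ = (A k + B k) + (A k - B k) := by rw [hsum, hdiff']
        _ = (2:ℝ) • A k := by module
      · refine smul_right_injective (Fin ns → ℝ) (by norm_num : (2:ℝ) ≠ 0) ?_
        calc (2:ℝ) • ps (k+1) = (ps k + ps (k+1)) - (ps k - ps (k+1)) := by module
        _ = (A k + B k) - (A k - B k) := by rw [hsum, hdiff']
        _ = (2:ℝ) • B k := by module
    have hPF : ∀ k, k ≤ N - 1 → ∀ m, m < p → pf k m = E k m ∧ pf k (m+1) = F k m := by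
      intro k hk m hm
      have hXeq : ((1:ℝ)/2) • (pf k m + pf k (m+1)) = (1/Δt) • Mf.mulVec (qf k (m+1) - qf k m) := by
        have h := h3 k hk m (by omega)
        have h2' := congrArg (fun v => Mf.mulVec v) h
        simp only [Matrix.mulVec_add, Matrix.mulVec_smul, Matrix.mulVec_mulVec,
          Matrix.mul_nonsing_inv Mf hdetMf, Matrix.one_mulVec] at h2'
        have h3' : Δt • (((1:ℝ)/2) • (pf k m + pf k (m+1))) =
            Mf.mulVec (qf k (m+1)) - Mf.mulVec (qf k m) := by
          rw [h2']; abel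
        have h4' := congrArg (fun v => (1/Δt) • v) h3'
        simp only [smul_smul] at h4'
        rw [show (1/Δt) * (Δt * ((1:ℝ)/2)) = (1:ℝ)/2 by field_simp] at h4'
        rw [Matrix.mulVec_sub]
        exact h4' 
      have hsum : pf k m + pf k (m+1) = E k m + F k m := by
        have h5 : ((1:ℝ)/2) • (pf k m + pf k (m+1)) = ((1:ℝ)/2) • (E k m + F k m) :=
          hXeq.trans (f6 k m).symm
        exact smul_right_injective (Fin nf → ℝ) (by norm_num : ((1:ℝ)/2) ≠ 0) h5
      have hdiff' : pf k m - pf k (m+1) = E k m - F k m := by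
        rw [h4 k hk m (by omega), f4 k m]; abel
      constructor
      · refine smul_right_injective (Fin nf → ℝ) (by norm_num : (2:ℝ) ≠ 0) ?_
        calc (2:ℝ) • pf k m = (pf k m + pf k (m+1)) + (pf k m - pf k (m+1)) := by module
        _ = (E k m + F k m) + (E k m - F k m) := by rw [hsum, hdiff']
        _ = (2:ℝ) • E k m := by module
      · refine smul_right_injective (Fin nf → ℝ) (by norm_num : (2:ℝ) ≠ 0) ?_
        calc (2:ℝ) • pf k (m+1) = (pf k m + pf k (m+1)) - (pf k m - pf k (m+1)) := by module
        _ = (E k m + F k m) - (E k m - F k m) := by rw [hsum, hdiff']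
        _ = (2:ℝ) • F k m := by module
    refine ⟨?_, ?_, ?_⟩
    · intro k hk1 hk2
      refine (hDEL1 k hk1).mpr ?_
      have ha : ps k = A k := (hPS k (by omega)).1
      have hb : ps (k-1+1) = B (k-1) := (hPS (k-1) (by omega)).2
      rw [show k - 1 + 1 = k by omega] at hb
      rw [← ha, ← hb]
    · intro k hk1 hk2
      refine (hDEL2 k hk1).mpr ?_
      have ha : pf k 0 = E k 0 := (hPF k (by omega) 0 (by omega)).1
      have hb : pf (k-1) (p-1+1) = F (k-1) (p-1) := (hPF (k-1) (by omega) (p-1) (by omega)).2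
      rw [hpp] at hb
      have hcc : pf (k-1) p = pf k 0 := by
        have := hc (k-1) (by omega)
        rwa [show k - 1 + 1 = k by omega] at this
      rw [← ha, ← hb, hcc]
    · intro k hk m hm1 hm2
      refine (hDEL3 k m hm1 (by omega)).mpr ?_
      have ha : pf k m = E k m := (hPF k hk m (by omega)).1
      have hb : pf k (m-1+1) = F k (m-1) := (hPF k hk (m-1) (by omega)).2
      rw [show m - 1 + 1 = m by omega] at hb
      rw [← ha, ← hb]
end

section
/- Let ω > 0, Δt > 0, α ∈ [0,1] and let p ≥ 1 be an integer. Define D = ω²Δt²(p²−1)/6 + 1 and the trapezoidal propagation matrix P ∈ ℝ^{2×2} with entries P₁₁ = −(ω²Δt²(p²/3 + (α−1/2)p + 1/6) − 1)/D, P₁₂ = Δt·p/D, P₂₁ = Δt·ω²·(ω²Δt²(p²/3 + (α−1/2)p + 1/6) − 1)·(p/2 − α + 1/2)/D − Δt·ω²·(α + p/2 − 1/2), P₂₂ = 1 − Δt²·p·ω²·(p/2 − α + 1/2)/D. Then det(P) = 1 and tr(P) = −2(2ω²Δt²p² + ω²Δt² − 6)/(ω²Δt²p² − ω²Δt² + 6);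 in particular the trace is independent of α. -/
/-- The propagation matrix `P` of the multirate variational integrator for the
harmonic oscillator (linear interpolation between macro nodes, trapezoidal rule
with weight `α` on the micro grid) has determinant `1` and the stated trace,
independent of `α`. -/
theorem trapezoidal_propagation_det_trace
    (ω Δt α : ℝ) (hω : 0 < ω) (hΔt : 0 < Δt) (hα : α ∈ Set.Icc (0 : ℝ) 1)
    (p : ℕ) (hp : 1 ≤ p)
    (D : ℝ) (hD : D = ω ^ 2 * Δt ^ 2 * ((p : ℝ) ^ 2 - 1) / 6 + 1)
    (P : Matrix (Fin 2) (Fin 2) ℝ)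
    (hP : P = !![-(ω ^ 2 * Δt ^ 2 * ((p : ℝ) ^ 2 / 3 + (α - 1 / 2) * p + 1 / 6) - 1) / D,
                 Δt * p / D;
                 Δt * ω ^ 2 * (ω ^ 2 * Δt ^ 2 * ((p : ℝ) ^ 2 / 3 + (α - 1 / 2) * p + 1 / 6) - 1)
                     * ((p : ℝ) / 2 - α + 1 / 2) / D
                   - Δt * ω ^ 2 * (α + (p : ℝ) / 2 - 1 / 2),
                 1 - Δt ^ 2 * p * ω ^ 2 * ((p : ℝ) / 2 - α + 1 / 2) / D]) :
    P.det = 1 ∧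
      P.trace = -2 * (2 * ω ^ 2 * Δt ^ 2 * (p : ℝ) ^ 2 + ω ^ 2 * Δt ^ 2 - 6) /
        (ω ^ 2 * Δt ^ 2 * (p : ℝ) ^ 2 - ω ^ 2 * Δt ^ 2 + 6) := by

  have hp1 : (1:ℝ) ≤ (p:ℝ) := by exact_mod_cast hp
  have hDpos : 0 < D := by
    rw [hD]
    have : 0 ≤ ω ^ 2 * Δt ^ 2 * ((p : ℝ) ^ 2 - 1) / 6 := by
      apply div_nonneg _ (by norm_num)
      apply mul_nonneg (mul_nonneg (sq_nonneg _) (sq_nonneg _))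
      nlinarith
    linarith
  have hDne : D ≠ 0 := ne_of_gt hDpos
  have hden : ω ^ 2 * Δt ^ 2 * (p : ℝ) ^ 2 - ω ^ 2 * Δt ^ 2 + 6 ≠ 0 := by
    have : ω ^ 2 * Δt ^ 2 * (p : ℝ) ^ 2 - ω ^ 2 * Δt ^ 2 + 6 = 6 * D := by rw [hD]; ring
    rw [this]; positivity
  subst hP
  constructor
  · rw [Matrix.det_fin_two_of]
    field_simp
    rw [hD] at hDne ⊢
    field_simp at hDne ⊢
    ring
  · have h6 : ω ^ 2 * Δt ^ 2 * (p : ℝ) ^ 2 - ω ^ 2 * Δt ^ 2 + 6 = 6 * D := by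
      rw [hD]; ring
    rw [Matrix.trace_fin_two_of, h6]
    field_simp
    rw [hD]
    ring
end

section
/- Let ω > 0, Δt > 0, α ∈ [0,1], let p ≥ 1 be an integer and set ΔT = pΔt. For the trapezoidal propagation matrix P with tr(P) = −2(2ω²Δt²p² + ω²Δt² − 6)/(ω²Δt²p² − ω²Δt² + 6) and det(P) = 1, the linear stability condition |tr(P)| < 2 holds if and only if ω²ΔT² < 12p²/(p² + 2). In particular, for p = 1 the stability bound on ω²ΔT² is 4. -/
/-- Linear stability of the trapezoidal multirate scheme for the harmonic
oscillator: `|tr P| < 2` holds iff `ω²ΔT² < 12p²/(p²+2)`; for `p = 1` the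
bound on `ω²ΔT²` is `4`. -/
theorem trapezoidal_stability_criterion
    (ω Δt α ΔT : ℝ) (hω : 0 < ω) (hΔt : 0 < Δt) (hα : α ∈ Set.Icc (0 : ℝ) 1)
    (p : ℕ) (hp : 1 ≤ p) (hΔT : ΔT = (p : ℝ) * Δt)
    (trP : ℝ)
    (htr : trP = -2 * (2 * ω ^ 2 * Δt ^ 2 * (p : ℝ) ^ 2 + ω ^ 2 * Δt ^ 2 - 6) /
        (ω ^ 2 * Δt ^ 2 * (p : ℝ) ^ 2 - ω ^ 2 * Δt ^ 2 + 6)) :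
    (|trP| < 2 ↔ ω ^ 2 * ΔT ^ 2 < 12 * (p : ℝ) ^ 2 / ((p : ℝ) ^ 2 + 2)) ∧
      (p = 1 → (|trP| < 2 ↔ ω ^ 2 * ΔT ^ 2 < 4)) := by
  have hx : 0 < ω ^ 2 * Δt ^ 2 := by positivity
  have hp1 : (1 : ℝ) ≤ (p : ℝ) := by exact_mod_cast hp
  have hp2 : (1 : ℝ) ≤ (p : ℝ) ^ 2 := by nlinarith
  have hD : 0 < ω ^ 2 * Δt ^ 2 * (p : ℝ) ^ 2 - ω ^ 2 * Δt ^ 2 + 6 := by nlinarith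
  have hP2 : 0 < (p : ℝ) ^ 2 + 2 := by positivity
  have key : |trP| < 2 ↔ ω ^ 2 * ΔT ^ 2 < 12 * (p : ℝ) ^ 2 / ((p : ℝ) ^ 2 + 2) := by
    rw [htr, hΔT, abs_lt, lt_div_iff₀ hP2]
    constructor
    · rintro ⟨h1, h2⟩
      rw [lt_div_iff₀ hD] at h1
      nlinarith [mul_pos hx (mul_pos hx hP2), sq_nonneg ((p:ℝ) - 1), mul_le_mul_of_nonneg_left hp2 hx.le]
    · intro h
      constructor
      · rw [lt_div_iff₀ hD]
        nlinarith
      · rw [div_lt_iff₀ hD]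
        nlinarith
  refine ⟨key, fun hp1' => ?_⟩
  subst hp1'
  rw [key]
  norm_num
end

section
/- Let ω > 0, Δt > 0, let p ≥ 1 be an integer and set ΔT = pΔt. For the midpoint propagation matrix P with tr(P) = 2(12 − 4Δt²p²ω² + Δt²ω²)/(12 + 2Δt²p²ω² + Δt²ω²) and det(P) = 1: (i) if p = 1 then |tr(P)| < 2 holds for all ω, Δt > 0 (unconditional linear stability, recovering the midpoint rule); (ii) if p ≥ 2 then |tr(P)| < 2 holds if and only if ω²ΔT² < 12p²/(p² − 1). In particular, for p = 2 linear stability is guaranteed by ω·ΔT < 4. -/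
/-- Linear stability of the midpoint multirate scheme for the harmonic
oscillator: for `p = 1` the scheme is unconditionally linearly stable; for
`p ≥ 2`, `|tr P| < 2` holds iff `ω²ΔT² < 12p²/(p²−1)`; for `p = 2` stability
is guaranteed by `ω·ΔT < 4`. -/
theorem midpoint_stability_criterion
    (ω Δt ΔT : ℝ) (hω : 0 < ω) (hΔt : 0 < Δt)
    (p : ℕ) (hp : 1 ≤ p) (hΔT : ΔT = (p : ℝ) * Δt)
    (trP : ℝ)
    (htr : trP = 2 * (12 - 4 * Δt ^ 2 * (p : ℝ) ^ 2 * ω ^ 2 + Δt ^ 2 * ω ^ 2) /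
        (12 + 2 * Δt ^ 2 * (p : ℝ) ^ 2 * ω ^ 2 + Δt ^ 2 * ω ^ 2)) :
    (p = 1 → |trP| < 2) ∧
      (2 ≤ p → (|trP| < 2 ↔ ω ^ 2 * ΔT ^ 2 < 12 * (p : ℝ) ^ 2 / ((p : ℝ) ^ 2 - 1))) ∧
      (p = 2 → ω * ΔT < 4 → |trP| < 2) := by
  have hp1 : (1 : ℝ) ≤ (p : ℝ) := by exact_mod_cast hp
  have hD : (0 : ℝ) < 12 + 2 * Δt ^ 2 * (p : ℝ) ^ 2 * ω ^ 2 + Δt ^ 2 * ω ^ 2 := by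
    positivity
  have hpos : (0 : ℝ) < (p : ℝ) := lt_of_lt_of_le one_pos hp1
  have hpp : (0 : ℝ) < Δt ^ 2 * (p : ℝ) ^ 2 * ω ^ 2 :=
    mul_pos (mul_pos (pow_pos hΔt 2) (pow_pos hpos 2)) (pow_pos hω 2)
  have key : |trP| < 2 ↔ Δt ^ 2 * ω ^ 2 * ((p : ℝ) ^ 2 - 1) < 12 := by
    rw [htr, abs_div, abs_of_pos hD, div_lt_iff₀ hD, abs_lt]
    constructor
    · rintro ⟨h1, h2⟩
      nlinarith
    · intro h
      constructor <;> nlinarith [hpp]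
  refine ⟨?_, ?_, ?_⟩
  · intro hpe
    subst hpe
    rw [key]
    push_cast
    nlinarith [sq_nonneg (Δt * ω)]
  · intro hp2
    have hp2' : (2 : ℝ) ≤ (p : ℝ) := by exact_mod_cast hp2
    have hq : (0 : ℝ) < (p : ℝ) ^ 2 - 1 := by nlinarith
    rw [key, hΔT, lt_div_iff₀ hq]
    constructor <;> intro h <;> nlinarith
  · intro hpe h4
    subst hpe
    rw [key]
    push_cast
    have hT : ΔT = 2 * Δt := by push_cast at hΔT; linarith
    rw [hT] at h4
    nlinarith [mul_pos hΔt hω, mul_pos (mul_pos hΔt hω) (mul_pos hΔt hω)]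
end

section
/- Let q > 1 be a real number. For real p > 0 and Δt > 0 with ΔT = pΔt, define the local error model e(Δt, ΔT, p) = p·Δt^q + ΔT^q. Then: (i) log₂(e(Δt, ΔT, p) / e(Δt/2, ΔT, 2p)) = q − 1 − log₂((1 + (2p)^{q−1})/(1 + p^{q−1})); and (ii) lim_{p→∞} log₂((1 + (2p)^{q−1})/(1 + p^{q−1})) = q − 1, so the observed error rate q − 1 − log₂((1 + (2p)^{q−1})/(1 + p^{q−1})) tends to 0 as p → ∞. -/
open Real Filter

/-- Local error model `e(Δt, ΔT, p) = p·Δt^q + ΔT^q` for refining only the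
micro grid: the logarithmic error rate equals
`q − 1 − log₂((1 + (2p)^{q−1})/(1 + p^{q−1}))`, and this rate tends to `0`
as `p → ∞`. -/
theorem micro_refinement_rate (q : ℝ) (hq : 1 < q) :
    (∀ p Δt ΔT : ℝ, 0 < p → 0 < Δt → ΔT = p * Δt →
      Real.logb 2
          ((p * Δt ^ q + ΔT ^ q) / (2 * p * (Δt / 2) ^ q + ΔT ^ q)) =
        q - 1 - Real.logb 2 ((1 + (2 * p) ^ (q - 1)) / (1 + p ^ (q - 1)))) ∧
    Tendsto (fun p : ℝ => Real.logb 2 ((1 + (2 * p) ^ (q - 1)) / (1 + p ^ (q - 1))))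
      atTop (nhds (q - 1)) := by
  have h2 : (0:ℝ) < 2 := by norm_num
  constructor
  · intro p Δt ΔT hp hΔt hΔT
    subst hΔT
    have hP : (0:ℝ) < p ^ (q - 1) := rpow_pos_of_pos hp _
    have h2P : (0:ℝ) < (2 * p) ^ (q - 1) := rpow_pos_of_pos (by linarith) _
    have hA : (0:ℝ) < Δt ^ q := rpow_pos_of_pos hΔt _
    have h2q1 : (0:ℝ) < (2:ℝ) ^ (1 - q) := rpow_pos_of_pos h2 _
    -- key rpow factorizations
    have hpq : p ^ q = p * p ^ (q - 1) := by
      have h := Real.rpow_add hp 1 (q - 1)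
      rw [Real.rpow_one, show (1:ℝ) + (q - 1) = q by ring] at h
      exact h
    have hmul : (p * Δt) ^ q = p ^ q * Δt ^ q :=
      Real.mul_rpow hp.le hΔt.le
    have hdiv : (Δt / 2) ^ q = Δt ^ q * (2:ℝ) ^ (-q) := by
      rw [Real.div_rpow hΔt.le h2.le, Real.rpow_neg h2.le, div_eq_mul_inv]
    have h2pq : (2 * p) ^ (q - 1) = (2:ℝ) ^ (q - 1) * p ^ (q - 1) :=
      Real.mul_rpow h2.le hp.le
    have h2sum : (2:ℝ) ^ (1 - q) + p ^ (q - 1) = (2:ℝ) ^ (1 - q) * (1 + (2 * p) ^ (q - 1)) := by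
      rw [h2pq, mul_add, mul_one, ← mul_assoc, ← Real.rpow_add h2]
      norm_num
    have h2p : 2 * p * ((2:ℝ) ^ (-q)) = (2:ℝ) ^ (1 - q) * p := by
      have h := Real.rpow_add h2 1 (-q)
      rw [Real.rpow_one, show (1:ℝ) + -q = 1 - q by ring] at h
      rw [h]; ring
    have hnum : p * Δt ^ q + (p * Δt) ^ q = p * Δt ^ q * (1 + p ^ (q - 1)) := by
      rw [hmul, hpq]; ring
    have hden : 2 * p * (Δt / 2) ^ q + (p * Δt) ^ q
        = p * Δt ^ q * ((2:ℝ) ^ (1 - q) * (1 + (2 * p) ^ (q - 1))) := by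
      rw [hmul, hpq, hdiv, ← h2sum]
      linear_combination (Δt ^ q) * h2p
    rw [hnum, hden]
    have hpos1 : (0:ℝ) < 1 + p ^ (q - 1) := by linarith
    have hpos2 : (0:ℝ) < 1 + (2 * p) ^ (q - 1) := by linarith
    have hpA : (0:ℝ) < p * Δt ^ q := by positivity
    rw [mul_div_mul_left _ _ (ne_of_gt hpA)]
    rw [Real.logb_div (ne_of_gt hpos1) (by positivity),
        Real.logb_mul (ne_of_gt h2q1) (ne_of_gt hpos2),
        Real.logb_div (ne_of_gt hpos2) (ne_of_gt hpos1),
        Real.logb_rpow h2 (by norm_num)]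
    ring
  · -- limit part
    have hc : (0:ℝ) < (2:ℝ) ^ (q - 1) := rpow_pos_of_pos h2 _
    have hlim : Tendsto (fun p : ℝ => (1 + (2 * p) ^ (q - 1)) / (1 + p ^ (q - 1)))
        atTop (nhds ((2:ℝ) ^ (q - 1))) := by
      have hP : Tendsto (fun p : ℝ => p ^ (q - 1)) atTop atTop :=
        tendsto_rpow_atTop (by linarith)
      have key : ∀ᶠ p : ℝ in atTop,
          (1 + (2 * p) ^ (q - 1)) / (1 + p ^ (q - 1))
            = (2:ℝ) ^ (q - 1) + (1 - (2:ℝ) ^ (q - 1)) / (1 + p ^ (q - 1)) := by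
        filter_upwards [eventually_gt_atTop 0] with p hp
        have hP' : (0:ℝ) < p ^ (q - 1) := rpow_pos_of_pos hp _
        have h2pq : (2 * p) ^ (q - 1) = (2:ℝ) ^ (q - 1) * p ^ (q - 1) :=
          Real.mul_rpow h2.le hp.le
        rw [h2pq]
        field_simp
        ring
      have h0 : Tendsto (fun p : ℝ => (1 - (2:ℝ) ^ (q - 1)) / (1 + p ^ (q - 1)))
          atTop (nhds 0) := by
        apply Tendsto.div_atTop tendsto_const_nhds
        exact tendsto_atTop_add_const_left _ _ hP
      have := (tendsto_const_nhds.add h0 :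
          Tendsto (fun p : ℝ => (2:ℝ) ^ (q - 1) + (1 - (2:ℝ) ^ (q - 1)) / (1 + p ^ (q - 1)))
          atTop (nhds ((2:ℝ) ^ (q - 1) + 0)))
      rw [add_zero] at this
      exact this.congr' (key.mono fun p h => h.symm)
    have hcont : ContinuousAt (fun x : ℝ => Real.logb 2 x) ((2:ℝ) ^ (q - 1)) := by
      apply Real.continuousAt_logb (ne_of_gt hc)
    have := hcont.tendsto.comp hlim
    rw [Real.logb_rpow h2 (by norm_num)] at this
    exact this
end
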